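/- arXiv:1910.08923 — 3 statements merged into one kernel-verified Lean document; each statement's English description precedes it below -/
import Mathlib

section
/- The group 𝒢̄ is perfect, and every interval exchange transformation g ∈ 𝒢_m (m ≥ 2), viewed as an element of 𝒢̄, is a product of at most m−1 commutators of elements of 𝒢̄. -/
/-- `f` is an interval exchange transformation (IET) of `[0,1)`, viewed as a permutation of `ℝ`
that fixes every point outside `[0,1)`: there is a finite subdivision
`0 = a 0 < a 1 < … < a (m+1) = 1` such that `f` is a translation on each half-open
interval `[a i, a (i+1))`. -/
def IsIET (f : Equiv.Perm ℝ) : Prop :=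
  (∀ x : ℝ, x ∉ Set.Ico (0 : ℝ) 1 → f x = x) ∧
  ∃ (m : ℕ) (a : Fin (m + 2) → ℝ),
    a 0 = 0 ∧ a (Fin.last (m + 1)) = 1 ∧ StrictMono a ∧
    ∀ i : Fin (m + 1), ∃ c : ℝ, ∀ x ∈ Set.Ico (a i.castSucc) (a i.succ), f x = x + c

/-- `f` is an interval exchange transformation with flips (FIET) of `[0,1)`, viewed as a
permutation of `ℝ` fixing every point outside `[0,1)`: there is a finite subdivision
`0 = a 0 < a 1 < … < a (m+1) = 1` such that on each open interval `(a i, a (i+1))`, `f` is an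
isometry, i.e. of the form `x ↦ x + c` or `x ↦ c - x`. -/
def IsFIET (f : Equiv.Perm ℝ) : Prop :=
  (∀ x : ℝ, x ∉ Set.Ico (0 : ℝ) 1 → f x = x) ∧
  ∃ (m : ℕ) (a : Fin (m + 2) → ℝ),
    a 0 = 0 ∧ a (Fin.last (m + 1)) = 1 ∧ StrictMono a ∧
    ∀ i : Fin (m + 1),
      (∃ c : ℝ, ∀ x ∈ Set.Ioo (a i.castSucc) (a i.succ), f x = x + c) ∨
      (∃ c : ℝ, ∀ x ∈ Set.Ioo (a i.castSucc) (a i.succ), f x = c - x)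

/-- Two permutations of `ℝ` agree outside a finite set; this is equality of the classes in the
quotient group `𝒢̄` of FIETs modulo maps that are the identity off a finite set. -/
def FEq (f g : Equiv.Perm ℝ) : Prop := {x : ℝ | f x ≠ g x}.Finite

open scoped commutatorElement

/-- The set of commutators `⁅a, b⁆ = a * b * a⁻¹ * b⁻¹` of interval exchange
transformations. -/
def IETCommutators : Set (Equiv.Perm ℝ) :=
  {x | ∃ a b : Equiv.Perm ℝ, IsIET a ∧ IsIET b ∧ x = ⁅a, b⁆}

/-- The set of commutators `⁅a, b⁆ = a * b * a⁻¹ * b⁻¹` of interval exchange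
transformations with flips. -/
def FIETCommutators : Set (Equiv.Perm ℝ) :=
  {x | ∃ a b : Equiv.Perm ℝ, IsFIET a ∧ IsFIET b ∧ x = ⁅a, b⁆}

/-- `g` is a product of at most `n` commutators of elements of the group `𝒢` of interval
exchange transformations; i.e. the commutator length of `g` in `𝒢` is at most `n`. -/
def IsProdOfIETCommutators (n : ℕ) (g : Equiv.Perm ℝ) : Prop :=
  ∃ l : List (Equiv.Perm ℝ), l.length ≤ n ∧ (∀ x ∈ l, x ∈ IETCommutators) ∧ g = l.prod

/-- `f ∈ 𝒢_m`: `f` is an IET of `[0,1)` admitting a subdivision into at most `m` half-open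
intervals on each of which it is a translation. -/
def MemGm (m : ℕ) (f : Equiv.Perm ℝ) : Prop :=
  (∀ x : ℝ, x ∉ Set.Ico (0 : ℝ) 1 → f x = x) ∧
  ∃ (k : ℕ) (a : Fin (k + 2) → ℝ), k + 1 ≤ m ∧
    a 0 = 0 ∧ a (Fin.last (k + 1)) = 1 ∧ StrictMono a ∧
    ∀ i : Fin (k + 1), ∃ c : ℝ, ∀ x ∈ Set.Ico (a i.castSucc) (a i.succ), f x = x + c

/-- `g` is periodic: every orbit `{gⁿ x : n ∈ ℤ}` is finite. -/
def IsPeriodicPerm (g : Equiv.Perm ℝ) : Prop :=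
  ∀ x : ℝ, (Set.range fun n : ℤ => (g ^ n) x).Finite

/-- `f` is a restricted rotation: for some half-open interval `J = [a, b) ⊆ [0,1)` and some
`α ∈ [0, b - a)`, `f` is the identity outside `J` and sends `x ∈ J` to
`a + ((x - a + α) mod (b - a))`. -/
def IsRestrictedRotation (f : Equiv.Perm ℝ) : Prop :=
  ∃ a b α : ℝ, 0 ≤ a ∧ a < b ∧ b ≤ 1 ∧ α ∈ Set.Ico (0 : ℝ) (b - a) ∧
    (∀ x : ℝ, x ∉ Set.Ico a b → f x = x) ∧
    ∀ x ∈ Set.Ico a b, f x = x + α - (b - a) * (⌊(x - a + α) / (b - a)⌋ : ℝ)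

/-- `Δ_α`: the additive subgroup of `ℝ` generated by `α 0, …, α (p-1)` and `1`. -/
def Delta {p : ℕ} (α : Fin p → ℝ) : AddSubgroup ℝ :=
  AddSubgroup.closure (Set.range α ∪ {1})

/-- `g ∈ Γ_α`: `g` is an IET all of whose discontinuity points (as a map of `[0,1)`)
belong to the subgroup `Δ`. -/
def MemGamma (Δ : AddSubgroup ℝ) (g : Equiv.Perm ℝ) : Prop :=
  IsIET g ∧
  ∀ x ∈ Set.Ico (0 : ℝ) 1, ¬ContinuousWithinAt (⇑g) (Set.Ico (0 : ℝ) 1) x → x ∈ Δ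

/-- `g ∈ Γ_α(J)` for `J = [c, d)`: `g` is an IET supported in `[c, d)` all of whose
discontinuity points belong to `Δ`. -/
def MemGammaJ (Δ : AddSubgroup ℝ) (c d : ℝ) (g : Equiv.Perm ℝ) : Prop :=
  IsIET g ∧ (∀ x : ℝ, x ∉ Set.Ico c d → g x = x) ∧
  ∀ x ∈ Set.Ico (0 : ℝ) 1, ¬ContinuousWithinAt (⇑g) (Set.Ico (0 : ℝ) 1) x → x ∈ Δ


namespace FIETProof

open Set

noncomputable section

/-! ### Reflections and rotations as permutations -/

def rfun (u v : ℝ) : ℝ → ℝ := fun x => if u < x ∧ x < v then u + v - x else x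

lemma rfun_invol (u v : ℝ) : Function.Involutive (rfun u v) := by
  intro x
  unfold rfun
  by_cases h : u < x ∧ x < v
  · rw [if_pos h, if_pos ⟨by linarith [h.2], by linarith [h.1]⟩]; ring
  · rw [if_neg h, if_neg h]

def rp (u v : ℝ) : Equiv.Perm ℝ := (rfun_invol u v).toPerm

lemma rp_apply (u v x : ℝ) : rp u v x = if u < x ∧ x < v then u + v - x else x := rfl

lemma rp_in {u v x : ℝ} (h1 : u < x) (h2 : x < v) : rp u v x = u + v - x := by
  rw [rp_apply, if_pos ⟨h1, h2⟩]

lemma rp_out {u v x : ℝ} (h : ¬(u < x ∧ x < v)) : rp u v x = x := by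
  rw [rp_apply, if_neg h]

lemma rp_inv (u v : ℝ) : (rp u v)⁻¹ = rp u v := by
  ext x
  rw [Equiv.Perm.inv_def, Equiv.symm_apply_eq]
  exact (rfun_invol u v x).symm

lemma rp_mul_self (u v : ℝ) : rp u v * rp u v = 1 := by
  ext x
  simp only [Equiv.Perm.mul_apply, Equiv.Perm.one_apply]
  exact rfun_invol u v x

def rot (a d b : ℝ) : Equiv.Perm ℝ := rp a b * rp a d * rp d b

lemma rot_in_left {a d b x : ℝ} (hdb : d ≤ b) (hx : x ∈ Set.Ioo a d) :
    rot a d b x = x + (b - d) := by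
  obtain ⟨h1, h2⟩ := hx
  have e1 : rp d b x = x := rp_out (by intro h; linarith [h.1])
  have e2 : rp a d x = a + d - x := rp_in h1 h2
  have e3 : rp a b (a + d - x) = a + b - (a + d - x) :=
    rp_in (by linarith) (by linarith)
  simp only [rot, Equiv.Perm.mul_apply, e1, e2, e3]; ring

lemma rot_in_right {a d b x : ℝ} (had : a ≤ d) (hx : x ∈ Set.Ioo d b) :
    rot a d b x = x - (d - a) := by
  obtain ⟨h1, h2⟩ := hx
  have e1 : rp d b x = d + b - x := rp_in h1 h2
  have e2 : rp a d (d + b - x) = d + b - x := rp_out (by intro h; linarith [h.2])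
  have e3 : rp a b (d + b - x) = a + b - (d + b - x) :=
    rp_in (by linarith) (by linarith)
  simp only [rot, Equiv.Perm.mul_apply, e1, e2, e3]; ring

lemma rot_out' {a d b x : ℝ} (had : a ≤ d) (hdb : d ≤ b) (hx : x ∉ Set.Ioo a b) :
    rot a d b x = x := by
  rw [Set.mem_Ioo, not_and_or, not_lt, not_lt] at hx
  have e1 : rp d b x = x := rp_out (by rintro ⟨p, q⟩; rcases hx with h | h <;> linarith)
  have e2 : rp a d x = x := rp_out (by rintro ⟨p, q⟩; rcases hx with h | h <;> linarith)
  have e3 : rp a b x = x := rp_out (by rintro ⟨p, q⟩; rcases hx with h | h <;> linarith)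
  simp only [rot, Equiv.Perm.mul_apply, e1, e2, e3]

lemma rot_inv_left {a d b y : ℝ} (had : a ≤ d) (hy : y ∈ Set.Ioo a (a + (b - d))) :
    (rot a d b)⁻¹ y = y + (d - a) := by
  rw [Equiv.Perm.inv_def, Equiv.symm_apply_eq]
  rw [rot_in_right had ⟨by linarith [hy.1], by linarith [hy.2]⟩]
  ring

lemma rot_inv_right {a d b y : ℝ} (hdb : d ≤ b) (hy : y ∈ Set.Ioo (a + (b - d)) b) :
    (rot a d b)⁻¹ y = y - (b - d) := by
  rw [Equiv.Perm.inv_def, Equiv.symm_apply_eq]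
  rw [rot_in_left hdb ⟨by linarith [hy.1], by linarith [hy.2]⟩]
  ring

lemma rot_inv_out {a d b y : ℝ} (had : a ≤ d) (hdb : d ≤ b) (hy : y ∉ Set.Ioo a b) :
    (rot a d b)⁻¹ y = y := by
  rw [Equiv.Perm.inv_def, Equiv.symm_apply_eq]
  exact (rot_out' had hdb hy).symm

/-! ### FEq basic lemmas -/

lemma FEq_rfl {f : Equiv.Perm ℝ} : FEq f f := by
  unfold FEq
  convert Set.finite_empty
  simp

lemma FEq_of_forall {f g : Equiv.Perm ℝ} {E : Set ℝ} (hE : E.Finite)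
    (h : ∀ x, x ∉ E → f x = g x) : FEq f g := by
  apply hE.subset
  intro x hx
  by_contra hxE
  exact hx (h x hxE)

lemma FEq_symm {f g : Equiv.Perm ℝ} (h : FEq f g) : FEq g f :=
  h.subset fun _ hx hne => hx hne.symm

lemma FEq_trans {f g h : Equiv.Perm ℝ} (h1 : FEq f g) (h2 : FEq g h) : FEq f h := by
  apply (h1.union h2).subset
  intro x hx
  simp only [Set.mem_union, Set.mem_setOf_eq]
  by_contra hc
  push_neg at hc
  exact hx (hc.1.trans hc.2)

lemma FEq_mul {f₁ g₁ f₂ g₂ : Equiv.Perm ℝ} (h1 : FEq f₁ g₁) (h2 : FEq f₂ g₂) :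
    FEq (f₁ * f₂) (g₁ * g₂) := by
  have hpre : ((⇑g₂) ⁻¹' {y | f₁ y ≠ g₁ y}).Finite :=
    h1.preimage (g₂.injective.injOn)
  apply (h2.union hpre).subset
  intro x hx
  simp only [Set.mem_union, Set.mem_setOf_eq, Set.mem_preimage]
  by_contra hc
  push_neg at hc
  apply hx
  simp only [Equiv.Perm.mul_apply, hc.1, hc.2]

lemma FEq_inv {f g : Equiv.Perm ℝ} (h : FEq f g) : FEq f⁻¹ g⁻¹ := by
  apply ((h.image ⇑g)).subset
  intro x hx
  simp only [Set.mem_image, Set.mem_setOf_eq]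
  refine ⟨g⁻¹ x, ?_, by simp⟩
  intro heq
  apply hx
  have : f (g⁻¹ x) = g (g⁻¹ x) := heq
  rw [show g (g⁻¹ x) = x from g.apply_symm_apply x] at this
  have := congrArg (⇑f⁻¹) this
  rw [show f⁻¹ (f (g⁻¹ x)) = g⁻¹ x from f.symm_apply_apply _] at this
  rw [← this]

end
end FIETProof
namespace FIETProof
open Set
noncomputable section

lemma exists_mem_Ioo_not {F : Set ℝ} (hF : F.Finite) {A B : ℝ} (h : A < B) :
    ∃ z ∈ Set.Ioo A B, z ∉ F := by
  have hinf : (Set.Ioo A B).Infinite := Set.infinite_coe_iff.1 (Set.Ioo.infinite h)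
  obtain ⟨z, hz⟩ := (hinf.diff hF).nonempty
  exact ⟨z, hz.1, hz.2⟩

lemma interval_bound {F : Set ℝ} (hF : F.Finite) {A B l r : ℝ} (hAB : A < B)
    (h : ∀ z ∈ Set.Ioo A B, z ∉ F → l ≤ z ∧ z < r) : l ≤ A ∧ B ≤ r := by
  constructor
  · by_contra hA
    push_neg at hA
    obtain ⟨z, hz, hzF⟩ := exists_mem_Ioo_not hF (lt_min hAB hA : A < min B l)
    have := h z ⟨hz.1, lt_of_lt_of_le hz.2 (min_le_left _ _)⟩ hzF
    have := lt_of_lt_of_le hz.2 (min_le_right _ _)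
    linarith [this]
  · by_contra hB
    push_neg at hB
    obtain ⟨z, hz, hzF⟩ := exists_mem_Ioo_not hF (max_lt hAB hB : max A r < B)
    have h1 := h z ⟨lt_of_le_of_lt (le_max_left _ _) hz.1, hz.2⟩ hzF
    have h2 := lt_of_le_of_lt (le_max_right _ _) hz.1
    linarith [h1.2]

lemma not_straddle {A B c d : ℝ} (hAB : A < B) (hcd : c < d)
    (h : Set.Ioo A B ∩ Set.Ioo c d = ∅) : B ≤ c ∨ d ≤ A := by
  by_contra hc
  push_neg at hc
  obtain ⟨h1, h2⟩ := hc
  have h3 : max A c < min B d := by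
    simp only [max_lt_iff, lt_min_iff]
    exact ⟨⟨hAB, h1⟩, ⟨h2, hcd⟩⟩
  obtain ⟨z, hz, -⟩ := exists_mem_Ioo_not Set.finite_empty h3
  have hzA : z ∈ Set.Ioo A B := ⟨lt_of_le_of_lt (le_max_left _ _) hz.1, lt_of_lt_of_le hz.2 (min_le_left _ _)⟩
  have hzc : z ∈ Set.Ioo c d := ⟨lt_of_le_of_lt (le_max_right _ _) hz.1, lt_of_lt_of_le hz.2 (min_le_right _ _)⟩
  have : z ∈ Set.Ioo A B ∩ Set.Ioo c d := ⟨hzA, hzc⟩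
  rw [h] at this
  exact this

/-! piece predicates -/

def PieceT (f : Equiv.Perm ℝ) (p q : ℝ) : Prop :=
  ∃ c : ℝ, ∃ S : Set ℝ, S.Finite ∧ ∀ x ∈ Set.Ioo p q, x ∉ S → f x = x + c

def PieceF (f : Equiv.Perm ℝ) (p q : ℝ) : Prop :=
  ∃ c : ℝ, ∃ S : Set ℝ, S.Finite ∧ ∀ x ∈ Set.Ioo p q, x ∉ S → f x = c - x

def PiecesP (P : Equiv.Perm ℝ → ℝ → ℝ → Prop) (f : Equiv.Perm ℝ) : ℝ → List ℝ → Prop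
  | t, [] => P f t 1
  | t, u :: L => t ≤ u ∧ u ≤ 1 ∧ P f t u ∧ PiecesP P f u L

lemma piecesP_map {P Q : Equiv.Perm ℝ → ℝ → ℝ → Prop} {f g : Equiv.Perm ℝ} :
    ∀ (L : List ℝ) (u : ℝ), PiecesP P f u L →
      (∀ p q, u ≤ p → q ≤ 1 → P f p q → Q g p q) → PiecesP Q g u L := by
  intro L
  induction L with
  | nil => intro u hP h; exact h u 1 le_rfl le_rfl hP
  | cons v L ih =>
    intro u hP h
    obtain ⟨huv, hv1, hp, hrest⟩ := hP
    exact ⟨huv, hv1, h u v le_rfl hv1 hp, ih v hrest (fun p q hvp hq1 => h p q (le_trans huv hvp) hq1)⟩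

end
end FIETProof
namespace FIETProof
open Set
noncomputable section

lemma transl_bound (f : Equiv.Perm ℝ) {t p q c : ℝ} {S₀ S : Set ℝ}
    (hS₀ : S₀.Finite) (hS : S.Finite)
    (hout : ∀ x, x ∉ Set.Ico t 1 → x ∉ S₀ → f x = x)
    (htp : t ≤ p) (hq1 : q ≤ 1) (hpq : p < q)
    (hc : ∀ x ∈ Set.Ioo p q, x ∉ S → f x = x + c) :
    t ≤ p + c ∧ q + c ≤ 1 := by
  by_cases hc0 : c = 0
  · subst hc0; constructor <;> linarith
  · apply interval_bound ((hS.image (· + c)).union hS₀) (by linarith : p + c < q + c)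
    intro z hz hzF
    simp only [Set.mem_union, Set.mem_image] at hzF
    push_neg at hzF
    have hxS : z - c ∉ S := fun hmem => (hzF.1 (z - c) hmem) (by ring)
    have hfx : f (z - c) = z := by
      rw [hc (z - c) ⟨by linarith [hz.1], by linarith [hz.2]⟩ hxS]; ring
    by_contra hzI
    have hfz : f z = z := hout z (by rw [Set.mem_Ico]; exact hzI) hzF.2
    have : z - c = z := f.injective (hfx.trans hfz.symm)
    exact hc0 (by linarith)

lemma flip_bound (f : Equiv.Perm ℝ) {t p q c : ℝ} {S₀ S : Set ℝ}
    (hS₀ : S₀.Finite) (hS : S.Finite)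
    (hout : ∀ x, x ∉ Set.Ico t 1 → x ∉ S₀ → f x = x)
    (htp : t ≤ p) (hq1 : q ≤ 1) (hpq : p < q)
    (hc : ∀ x ∈ Set.Ioo p q, x ∉ S → f x = c - x) :
    t ≤ c - q ∧ c - p ≤ 1 := by
  apply interval_bound (((hS.image (c - ·)).union hS₀).union (Set.finite_singleton (c / 2)))
    (by linarith : c - q < c - p)
  intro z hz hzF
  simp only [Set.mem_union, Set.mem_image, Set.mem_singleton_iff] at hzF
  push_neg at hzF
  have hxS : c - z ∉ S := fun hmem => (hzF.1.1 (c - z) hmem) (by ring)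
  have hfx : f (c - z) = z := by
    rw [hc (c - z) ⟨by linarith [hz.2], by linarith [hz.1]⟩ hxS]; ring
  by_contra hzI
  have hfz : f z = z := hout z (by rw [Set.mem_Ico]; exact hzI) hzF.1.2
  have : c - z = z := f.injective (hfx.trans hfz.symm)
  exact hzF.2 (by linarith)

lemma transl_surj {f : Equiv.Perm ℝ} {p q c : ℝ} {S : Set ℝ}
    (hc : ∀ x ∈ Set.Ioo p q, x ∉ S → f x = x + c) :
    ∀ z ∈ Set.Ioo (p + c) (q + c), z ∉ (S.image (· + c)) → ∃ x ∈ Set.Ioo p q, f x = z := by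
  intro z hz hzF
  simp only [Set.mem_image] at hzF; push_neg at hzF
  have hxS : z - c ∉ S := fun hmem => (hzF (z - c) hmem) (by ring)
  exact ⟨z - c, ⟨by linarith [hz.1], by linarith [hz.2]⟩, by
    rw [hc (z - c) ⟨by linarith [hz.1], by linarith [hz.2]⟩ hxS]; ring⟩

lemma flip_surj {f : Equiv.Perm ℝ} {p q c : ℝ} {S : Set ℝ}
    (hc : ∀ x ∈ Set.Ioo p q, x ∉ S → f x = c - x) :
    ∀ z ∈ Set.Ioo (c - q) (c - p), z ∉ (S.image (c - ·)) → ∃ x ∈ Set.Ioo p q, f x = z := by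
  intro z hz hzF
  simp only [Set.mem_image] at hzF; push_neg at hzF
  have hxS : c - z ∉ S := fun hmem => (hzF (c - z) hmem) (by ring)
  exact ⟨c - z, ⟨by linarith [hz.2], by linarith [hz.1]⟩, by
    rw [hc (c - z) ⟨by linarith [hz.2], by linarith [hz.1]⟩ hxS]; ring⟩

lemma img_disj (f : Equiv.Perm ℝ) {t u p q A₁ B₁ A₂ B₂ : ℝ} {S₁ S₂ : Set ℝ}
    (h₁ : S₁.Finite) (h₂ : S₂.Finite) (hup : u ≤ p)
    (e₁ : ∀ z ∈ Set.Ioo A₁ B₁, z ∉ S₁ → ∃ x ∈ Set.Ioo t u, f x = z)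
    (e₂ : ∀ z ∈ Set.Ioo A₂ B₂, z ∉ S₂ → ∃ x ∈ Set.Ioo p q, f x = z) :
    Set.Ioo A₁ B₁ ∩ Set.Ioo A₂ B₂ = ∅ := by
  by_contra hne
  obtain ⟨z₀, hz₀⟩ := Set.nonempty_iff_ne_empty.2 hne
  rw [Set.Ioo_inter_Ioo] at hz₀
  have hlt : max A₁ A₂ < min B₁ B₂ := by
    by_contra hge
    rw [Set.Ioo_eq_empty hge] at hz₀
    exact hz₀
  obtain ⟨z, hz, hzF⟩ := exists_mem_Ioo_not (h₁.union h₂) hlt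
  simp only [Set.mem_union, not_or] at hzF
  have hz1 : z ∈ Set.Ioo A₁ B₁ :=
    ⟨lt_of_le_of_lt (le_max_left _ _) hz.1, lt_of_lt_of_le hz.2 (min_le_left _ _)⟩
  have hz2 : z ∈ Set.Ioo A₂ B₂ :=
    ⟨lt_of_le_of_lt (le_max_right _ _) hz.1, lt_of_lt_of_le hz.2 (min_le_right _ _)⟩
  obtain ⟨x₁, hx₁, hfx₁⟩ := e₁ z hz1 hzF.1
  obtain ⟨x₂, hx₂, hfx₂⟩ := e₂ z hz2 hzF.2
  have : x₁ = x₂ := f.injective (hfx₁.trans hfx₂.symm)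
  subst this
  exact absurd (lt_of_lt_of_le hx₁.2 hup) (not_lt.2 (le_of_lt hx₂.1))

/-- Main transformation lemma: composing with a corrector `τ` which translates every
interval right of the first piece (and disjoint from its image) preserves piece structure. -/
lemma piece_transform (f τ : Equiv.Perm ℝ) {t u A₁ B₁ : ℝ} {S₀ S₁ : Set ℝ}
    (hS₀ : S₀.Finite) (hS₁ : S₁.Finite)
    (hout : ∀ x, x ∉ Set.Ico t 1 → x ∉ S₀ → f x = x)
    (htu : t < u)
    (e₁ : ∀ z ∈ Set.Ioo A₁ B₁, z ∉ S₁ → ∃ x ∈ Set.Ioo t u, f x = z)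
    (hτ : ∀ A B, t ≤ A → B ≤ 1 → A < B → Set.Ioo A B ∩ Set.Ioo A₁ B₁ = ∅ →
      ∃ c', ∀ z ∈ Set.Ioo A B, τ z = z + c')
    (p q : ℝ) (hup : u ≤ p) (hq1 : q ≤ 1) :
    (PieceT f p q → PieceT (τ * f) p q) ∧ (PieceF f p q → PieceF (τ * f) p q) := by
  by_cases hpq : p < q
  case neg =>
    constructor <;> rintro ⟨c, S, hS, -⟩ <;>
      exact ⟨c, S, hS, fun x hx _ => absurd hx (by rw [Set.Ioo_eq_empty hpq]; exact Set.notMem_empty x)⟩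
  case pos =>
    have htp : t ≤ p := le_trans (le_of_lt htu) hup
    constructor
    · rintro ⟨c, S, hS, hc⟩
      obtain ⟨hb1, hb2⟩ := transl_bound f hS₀ hS hout htp hq1 hpq hc
      have hdisj : Set.Ioo (p + c) (q + c) ∩ Set.Ioo A₁ B₁ = ∅ := by
        rw [Set.inter_comm]
        exact img_disj f hS₁ (hS.image (· + c)) hup e₁ (transl_surj hc)
      obtain ⟨c', hc'⟩ := hτ (p + c) (q + c) hb1 hb2 (by linarith) hdisj
      refine ⟨c + c', S, hS, fun x hx hxS => ?_⟩
      rw [Equiv.Perm.mul_apply, hc x hx hxS,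
        hc' (x + c) ⟨by linarith [hx.1], by linarith [hx.2]⟩]
      ring
    · rintro ⟨c, S, hS, hc⟩
      obtain ⟨hb1, hb2⟩ := flip_bound f hS₀ hS hout htp hq1 hpq hc
      have hdisj : Set.Ioo (c - q) (c - p) ∩ Set.Ioo A₁ B₁ = ∅ := by
        rw [Set.inter_comm]
        exact img_disj f hS₁ (hS.image (c - ·)) hup e₁ (flip_surj hc)
      obtain ⟨c', hc'⟩ := hτ (c - q) (c - p) hb1 hb2 (by linarith) hdisj
      refine ⟨c + c', S, hS, fun x hx hxS => ?_⟩
      rw [Equiv.Perm.mul_apply, hc x hx hxS,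
        hc' (c - x) ⟨by linarith [hx.2], by linarith [hx.1]⟩]
      ring

end
end FIETProof
namespace FIETProof
open Set
noncomputable section

lemma gen_isFIET (f : Equiv.Perm ℝ) (hout : ∀ x : ℝ, x ∉ Set.Ico (0:ℝ) 1 → f x = x)
    (B : Finset ℝ) (h0B : (0:ℝ) ∈ B) (h1B : (1:ℝ) ∈ B)
    (hB : ∀ b ∈ B, b ∈ Set.Icc (0:ℝ) 1)
    (hp : ∀ u v : ℝ, u ∈ B → v ∈ B → u < v → (∀ w ∈ B, w ≤ u ∨ v ≤ w) →
      (∃ c, ∀ x ∈ Set.Ioo u v, f x = x + c) ∨ (∃ c, ∀ x ∈ Set.Ioo u v, f x = c - x)) :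
    IsFIET f := by
  refine ⟨hout, ?_⟩
  have hcard : 1 < B.card := Finset.one_lt_card.mpr ⟨0, h0B, 1, h1B, by norm_num⟩
  obtain ⟨m, hm⟩ : ∃ m, B.card = m + 2 := ⟨B.card - 2, by omega⟩
  set e := B.orderIsoOfFin hm with he
  refine ⟨m, fun i => (e i : ℝ), ?_, ?_, ?_, ?_⟩
  · -- a 0 = 0
    have h1 : (e 0 : ℝ) ∈ B := (e 0).2
    have h2 : (0:ℝ) ≤ (e 0 : ℝ) := (hB _ h1).1
    have h3 : (e 0 : ℝ) ≤ 0 := by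
      have := e.monotone (Fin.zero_le (e.symm ⟨0, h0B⟩))
      calc (e 0 : ℝ) ≤ (e (e.symm ⟨0, h0B⟩) : ℝ) := this
        _ = 0 := by rw [OrderIso.apply_symm_apply]
    linarith
  · -- a last = 1
    have h1 : (e (Fin.last (m+1)) : ℝ) ∈ B := (e _).2
    have h2 : (e (Fin.last (m+1)) : ℝ) ≤ 1 := (hB _ h1).2
    have h3 : (1:ℝ) ≤ (e (Fin.last (m+1)) : ℝ) := by
      have := e.monotone (Fin.le_last (e.symm ⟨1, h1B⟩))
      calc (1:ℝ) = (e (e.symm ⟨1, h1B⟩) : ℝ) := by rw [OrderIso.apply_symm_apply]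
        _ ≤ _ := this
    linarith
  · intro i j hij
    exact_mod_cast e.strictMono hij
  · intro i
    set u : ℝ := (e i.castSucc : ℝ)
    set v : ℝ := (e i.succ : ℝ)
    have huv : u < v := by
      have : i.castSucc < i.succ := Fin.castSucc_lt_succ (i := i)
      exact_mod_cast e.strictMono this
    apply hp u v (e i.castSucc).2 (e i.succ).2 huv
    intro w hw
    set j := e.symm ⟨w, hw⟩ with hj
    have hwe : (e j : ℝ) = w := by rw [hj, OrderIso.apply_symm_apply]
    by_cases hji : j ≤ i.castSucc
    · left; rw [← hwe]; exact_mod_cast e.monotone hji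
    · right
      push_neg at hji
      have : i.succ ≤ j := by
        rwa [Fin.castSucc_lt_iff_succ_le] at hji
      rw [← hwe]; exact_mod_cast e.monotone this

lemma isFIET_rp {u v : ℝ} (h0 : 0 ≤ u) (huv : u < v) (h1 : v ≤ 1) : IsFIET (rp u v) := by
  apply gen_isFIET _ (fun x hx => rp_out (by
      rw [Set.mem_Ico] at hx; push_neg at hx
      rintro ⟨p, q⟩
      rcases le_or_gt 0 x with h | h
      · linarith [hx h]
      · linarith))
    ({0, u, v, 1} : Finset ℝ)
    (by simp) (by simp) ?_ ?_
  · intro b hb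
    simp only [Finset.mem_insert, Finset.mem_singleton] at hb
    rcases hb with rfl | rfl | rfl | rfl <;> constructor <;> norm_num <;> linarith
  · intro p q hpB hqB hpq hgap
    by_cases hq : q ≤ u
    · exact Or.inl ⟨0, fun x hx => by
        rw [rp_out (fun h => by linarith [hx.2, h.1]), add_zero]⟩
    by_cases hv : v ≤ p
    · exact Or.inl ⟨0, fun x hx => by
        rw [rp_out (fun h => by linarith [hx.1, h.2]), add_zero]⟩
    push_neg at hq hv
    have hup : u ≤ p := by
      rcases hgap u (by simp) with h | h
      · exact h
      · linarith
    have hqv : q ≤ v := by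
      rcases hgap v (by simp) with h | h
      · linarith
      · exact h
    exact Or.inr ⟨u + v, fun x hx => by
      rw [rp_in (by linarith [hx.1]) (by linarith [hx.2])]⟩

lemma isFIET_rot {a d b : ℝ} (h0 : 0 ≤ a) (had : a < d) (hdb : d < b) (hb1 : b ≤ 1) :
    IsFIET (rot a d b) := by
  apply gen_isFIET _ (fun x hx => rot_out' (le_of_lt had) (le_of_lt hdb) (by
      rw [Set.mem_Ico] at hx; push_neg at hx
      rintro ⟨p, q⟩
      rcases le_or_gt 0 x with h | h
      · linarith [hx h]
      · linarith))
    ({0, a, d, b, 1} : Finset ℝ)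
    (by simp) (by simp) ?_ ?_
  · intro x hx
    simp only [Finset.mem_insert, Finset.mem_singleton] at hx
    rcases hx with rfl | rfl | rfl | rfl | rfl <;> constructor <;> norm_num <;> linarith
  · intro p q hpB hqB hpq hgap
    left
    by_cases hq : q ≤ a
    · exact ⟨0, fun x hx => by
        rw [rot_out' (le_of_lt had) (le_of_lt hdb)
          (fun h => by simp only [Set.mem_Ioo] at h; linarith [hx.2, h.1]), add_zero]⟩
    by_cases hb : b ≤ p
    · exact ⟨0, fun x hx => by
        rw [rot_out' (le_of_lt had) (le_of_lt hdb)
          (fun h => by simp only [Set.mem_Ioo] at h; linarith [hx.1, h.2]), add_zero]⟩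
    push_neg at hq hb
    have hap : a ≤ p := by
      rcases hgap a (by simp) with h | h
      · exact h
      · linarith
    have hqb : q ≤ b := by
      rcases hgap b (by simp) with h | h
      · linarith
      · exact h
    rcases hgap d (by simp) with hd | hd
    · exact ⟨-(d - a), fun x hx => by
        rw [rot_in_right (le_of_lt had) ⟨by linarith [hx.1], by linarith [hx.2]⟩]; ring⟩
    · exact ⟨b - d, fun x hx =>
        rot_in_left (le_of_lt hdb) ⟨by linarith [hx.1], by linarith [hx.2]⟩⟩

end
end FIETProof
namespace FIETProof
open Set
noncomputable section

lemma rot_comm {a d b : ℝ} (h0 : 0 ≤ a) (had : a < d) (hdb : d < b) (hb1 : b ≤ 1) :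
    ∃ k ∈ FIETCommutators, FEq (rot a d b) k := by
  set e := (b + d) / 2 with he
  have hae : a < e := by rw [he]; linarith
  have heb : e < b := by rw [he]; linarith
  refine ⟨⁅rot a e b, rp a b⁆,
    ⟨rot a e b, rp a b, isFIET_rot h0 hae heb hb1, isFIET_rp h0 (lt_trans had hdb) hb1, rfl⟩, ?_⟩
  rw [commutatorElement_def, rp_inv]
  apply FEq_of_forall ((((Set.finite_singleton b).insert e).insert d).insert a)
  intro x hxE
  simp only [Set.mem_insert_iff, Set.mem_singleton_iff, not_or] at hxE
  obtain ⟨hxa, hxd, hxe, hxb⟩ := hxE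
  simp only [Equiv.Perm.mul_apply]
  by_cases hm1 : x ∈ Set.Ioo a d
  · obtain ⟨hax, hxd'⟩ := hm1
    rw [rot_in_left (le_of_lt hdb) ⟨hax, hxd'⟩]
    rw [rp_in hax (by linarith)]
    rw [rot_inv_right (le_of_lt heb)
      (⟨by linarith, by linarith⟩ : a + b - x ∈ Set.Ioo (a + (b - e)) b)]
    rw [rp_in (show a < a + b - x - (b - e) by linarith)
      (show a + b - x - (b - e) < b by linarith)]
    rw [rot_in_left (le_of_lt heb)
      (⟨by linarith, by linarith⟩ : a + b - (a + b - x - (b - e)) ∈ Set.Ioo a e)]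
    rw [he]; ring
  · by_cases hm2 : x ∈ Set.Ioo d e
    · obtain ⟨hdx, hxe'⟩ := hm2
      rw [rot_in_right (le_of_lt had) ⟨hdx, by linarith⟩]
      rw [rp_in (show a < x by linarith) (show x < b by linarith)]
      rw [rot_inv_right (le_of_lt heb)
        (⟨by linarith, by linarith⟩ : a + b - x ∈ Set.Ioo (a + (b - e)) b)]
      rw [rp_in (show a < a + b - x - (b - e) by linarith)
        (show a + b - x - (b - e) < b by linarith)]
      rw [rot_in_right (le_of_lt hae)
        (⟨by linarith, by linarith⟩ : a + b - (a + b - x - (b - e)) ∈ Set.Ioo e b)]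
      rw [he]; ring
    · by_cases hm3 : x ∈ Set.Ioo e b
      · obtain ⟨hex, hxb'⟩ := hm3
        rw [rot_in_right (le_of_lt had) ⟨by linarith, hxb'⟩]
        rw [rp_in (show a < x by linarith) (show x < b by linarith)]
        rw [rot_inv_left (le_of_lt hae)
          (⟨by linarith, by linarith⟩ : a + b - x ∈ Set.Ioo a (a + (b - e)))]
        rw [rp_in (show a < a + b - x + (e - a) by linarith)
          (show a + b - x + (e - a) < b by linarith)]
        rw [rot_in_left (le_of_lt heb)
          (⟨by linarith, by linarith⟩ : a + b - (a + b - x + (e - a)) ∈ Set.Ioo a e)]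
        rw [he]; ring
      · have hout : x ∉ Set.Ioo a b := by
          rintro ⟨hax, hxb'⟩
          rcases lt_trichotomy x d with h | h | h
          · exact hm1 ⟨hax, h⟩
          · exact hxd h
          · rcases lt_trichotomy x e with h' | h' | h'
            · exact hm2 ⟨h, h'⟩
            · exact hxe h'
            · exact hm3 ⟨h', hxb'⟩
        have hnm : ¬(a < x ∧ x < b) := by rw [Set.mem_Ioo] at hout; exact hout
        rw [rot_out' (le_of_lt had) (le_of_lt hdb) hout]
        rw [rp_out hnm]
        rw [rot_inv_out (le_of_lt hae) (le_of_lt heb) hout]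
        rw [rp_out hnm]
        rw [rot_out' (le_of_lt hae) (le_of_lt heb) hout]

lemma rot_comm_inv {a d b : ℝ} (h0 : 0 ≤ a) (had : a < d) (hdb : d < b) (hb1 : b ≤ 1) :
    ∃ k ∈ FIETCommutators, FEq (rot a d b)⁻¹ k := by
  obtain ⟨k, ⟨w', R', hw', hR', rfl⟩, hFEq⟩ := rot_comm h0 had hdb hb1
  refine ⟨⁅R', w'⁆, ⟨R', w', hR', hw', rfl⟩, ?_⟩
  have := FEq_inv hFEq
  rwa [commutatorElement_inv] at this

lemma refl_decomp {u v : ℝ} (h0 : 0 ≤ u) (huv : u < v) (h1 : v ≤ 1) :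
    ∃ k₁ k₂, k₁ ∈ FIETCommutators ∧ k₂ ∈ FIETCommutators ∧ FEq (rp u v) (k₁ * k₂) := by
  set m := (u + v) / 2 with hm
  have hum : u < m := by rw [hm]; linarith
  have hmv : m < v := by rw [hm]; linarith
  obtain ⟨k₁, hk₁mem, hk₁⟩ := rot_comm h0 hum hmv h1
  refine ⟨k₁, ⁅rot u m v, rp u m⁆, hk₁mem,
    ⟨rot u m v, rp u m, isFIET_rot h0 hum hmv h1, isFIET_rp h0 hum (by linarith), rfl⟩, ?_⟩
  have step1 : FEq (rp u v) (rot u m v * ⁅rot u m v, rp u m⁆) := by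
    rw [commutatorElement_def, rp_inv]
    apply FEq_of_forall (((Set.finite_singleton v).insert m).insert u)
    intro x hxE
    simp only [Set.mem_insert_iff, Set.mem_singleton_iff, not_or] at hxE
    obtain ⟨hxu, hxm, hxv⟩ := hxE
    simp only [Equiv.Perm.mul_apply]
    by_cases hm1 : x ∈ Set.Ioo u m
    · obtain ⟨hux, hxm'⟩ := hm1
      rw [rp_in hux (show x < v by linarith)]
      rw [rp_in hux hxm']
      rw [rot_inv_left (le_of_lt hum)
        (⟨by linarith, by linarith⟩ : u + m - x ∈ Set.Ioo u (u + (v - m)))]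
      rw [rp_out (show ¬(u < u + m - x + (m - u) ∧ u + m - x + (m - u) < m) by
        rintro ⟨p, q⟩; linarith)]
      rw [rot_in_right (le_of_lt hum)
        (⟨by linarith, by linarith⟩ : u + m - x + (m - u) ∈ Set.Ioo m v)]
      rw [rot_in_left (le_of_lt hmv)
        (⟨by linarith, by linarith⟩ : u + m - x + (m - u) - (m - u) ∈ Set.Ioo u m)]
      rw [hm]; ring
    · by_cases hm2 : x ∈ Set.Ioo m v
      · obtain ⟨hmx, hxv'⟩ := hm2
        rw [rp_in (show u < x by linarith) hxv']
        rw [rp_out (show ¬(u < x ∧ x < m) by rintro ⟨p, q⟩; linarith)]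
        rw [rot_inv_right (le_of_lt hmv)
          (⟨by linarith, by linarith⟩ : x ∈ Set.Ioo (u + (v - m)) v)]
        rw [rp_in (show u < x - (v - m) by linarith) (show x - (v - m) < m by linarith)]
        rw [rot_in_left (le_of_lt hmv)
          (⟨by linarith, by linarith⟩ : u + m - (x - (v - m)) ∈ Set.Ioo u m)]
        rw [rot_in_right (le_of_lt hum)
          (⟨by linarith, by linarith⟩ : u + m - (x - (v - m)) + (v - m) ∈ Set.Ioo m v)]
        rw [hm]; ring
      · have hout : x ∉ Set.Ioo u v := by
          rintro ⟨hux, hxv'⟩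
          rcases lt_trichotomy x m with h | h | h
          · exact hm1 ⟨hux, h⟩
          · exact hxm h
          · exact hm2 ⟨h, hxv'⟩
        have hnm : ¬(u < x ∧ x < v) := by rw [Set.mem_Ioo] at hout; exact hout
        rw [rp_out hnm]
        rw [rp_out (show ¬(u < x ∧ x < m) by rintro ⟨p, q⟩; exact hnm ⟨p, by linarith⟩)]
        rw [rot_inv_out (le_of_lt hum) (le_of_lt hmv) hout]
        rw [rp_out (show ¬(u < x ∧ x < m) by rintro ⟨p, q⟩; exact hnm ⟨p, by linarith⟩)]
        rw [rot_out' (le_of_lt hum) (le_of_lt hmv) hout]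
        rw [rot_out' (le_of_lt hum) (le_of_lt hmv) hout]
  exact FEq_trans step1 (FEq_mul hk₁ FEq_rfl)

end
end FIETProof
namespace FIETProof
open Set
noncomputable section

lemma engineA : ∀ (L : List ℝ) (t : ℝ) (f : Equiv.Perm ℝ), 0 ≤ t →
    (∃ S₀ : Set ℝ, S₀.Finite ∧ ∀ x, x ∉ Set.Ico t 1 → x ∉ S₀ → f x = x) →
    PiecesP PieceT f t L →
    ∃ l : List (Equiv.Perm ℝ), l.length ≤ L.length ∧
      (∀ k ∈ l, k ∈ FIETCommutators) ∧ FEq f l.prod := by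
  intro L
  induction L with
  | nil =>
    intro t f h0t houtE hP
    obtain ⟨S₀, hS₀, hout⟩ := houtE
    obtain ⟨c, S, hS, hc⟩ := (hP : PieceT f t 1)
    refine ⟨[], by simp, by simp, ?_⟩
    by_cases ht1 : t < 1
    · have hbd := transl_bound f hS₀ hS hout le_rfl le_rfl ht1 hc
      have hc0 : c = 0 := by linarith [hbd.1, hbd.2]
      subst hc0
      apply FEq_of_forall ((hS₀.union hS).union (Set.finite_singleton t))
      intro x hx
      simp only [Set.mem_union, Set.mem_singleton_iff, not_or] at hx
      simp only [List.prod_nil, Equiv.Perm.one_apply]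
      by_cases hxI : x ∈ Set.Ioo t 1
      · rw [hc x hxI hx.1.2, add_zero]
      · refine hout x ?_ hx.1.1
        rw [Set.mem_Ico]
        rintro ⟨hh1, hh2⟩
        exact hxI ⟨lt_of_le_of_ne hh1 (Ne.symm hx.2), hh2⟩
    · apply FEq_of_forall hS₀
      intro x hx
      simp only [List.prod_nil, Equiv.Perm.one_apply]
      exact hout x (by rw [Set.mem_Ico]; rintro ⟨hh1, hh2⟩; linarith) hx
  | cons u L ih =>
    intro t f h0t houtE hP
    obtain ⟨S₀, hS₀, hout⟩ := houtE
    obtain ⟨htu', hu1, hpc, hrest⟩ :=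
      (hP : t ≤ u ∧ u ≤ 1 ∧ PieceT f t u ∧ PiecesP PieceT f u L)
    by_cases htu : t < u
    case neg =>
      have heq : t = u := le_antisymm htu' (not_lt.1 htu)
      subst heq
      obtain ⟨l, hlen, hmem, hFEq⟩ := ih t f h0t ⟨S₀, hS₀, hout⟩ hrest
      exact ⟨l, le_trans hlen (by simp), hmem, hFEq⟩
    case pos =>
      obtain ⟨c, S, hS, hc⟩ := hpc
      have h0u : 0 ≤ u := le_trans h0t (le_of_lt htu)
      by_cases hc0 : c = 0
      · subst hc0
        have houtfin : (S₀ ∪ S ∪ {t}).Finite :=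
          (hS₀.union hS).union (Set.finite_singleton t)
        have hout' : ∀ x, x ∉ Set.Ico u 1 → x ∉ (S₀ ∪ S ∪ {t}) → f x = x := by
          intro x hxI hxS
          simp only [Set.mem_union, Set.mem_singleton_iff, not_or] at hxS
          by_cases hxm : x ∈ Set.Ioo t u
          · rw [hc x hxm hxS.1.2, add_zero]
          · refine hout x ?_ hxS.1.1
            rw [Set.mem_Ico] at hxI ⊢
            rintro ⟨hh1, hh2⟩
            apply hxI
            constructor
            · by_contra hux
              push_neg at hux
              exact hxm ⟨lt_of_le_of_ne hh1 (Ne.symm hxS.2), hux⟩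
            · exact hh2
        obtain ⟨l, hlen, hmem, hFEq⟩ := ih u f h0u ⟨_, houtfin, hout'⟩ hrest
        exact ⟨l, le_trans hlen (by simp), hmem, hFEq⟩
      · have hbd := transl_bound f hS₀ hS hout le_rfl hu1 htu hc
        have hcpos : 0 < c := lt_of_le_of_ne (by linarith [hbd.1]) (Ne.symm hc0)
        have h1 : t < t + c := by linarith
        have h2 : t + c < u + c := by linarith
        have h3 : u + c ≤ 1 := hbd.2
        set ρ := rot t (t + c) (u + c) with hρ
        set f₁ := ρ * f with hf₁
        have houtfin : (S₀ ∪ S ∪ {t}).Finite :=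
          (hS₀.union hS).union (Set.finite_singleton t)
        have hout₁ : ∀ x, x ∉ Set.Ico u 1 → x ∉ (S₀ ∪ S ∪ {t}) → f₁ x = x := by
          intro x hxI hxS
          simp only [Set.mem_union, Set.mem_singleton_iff, not_or] at hxS
          rw [hf₁, Equiv.Perm.mul_apply]
          by_cases hxm : x ∈ Set.Ioo t u
          · rw [hc x hxm hxS.1.2, hρ,
              rot_in_right (le_of_lt h1) ⟨by linarith [hxm.1], by linarith [hxm.2]⟩]
            ring
          · have hxout : x ∉ Set.Ico t 1 := by
              rw [Set.mem_Ico] at hxI ⊢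
              rintro ⟨hh1, hh2⟩
              apply hxI
              refine ⟨?_, hh2⟩
              by_contra hux
              push_neg at hux
              exact hxm ⟨lt_of_le_of_ne hh1 (Ne.symm hxS.2), hux⟩
            rw [hout x hxout hxS.1.1, hρ]
            apply rot_out' (le_of_lt h1) (le_of_lt h2)
            rw [Set.mem_Ico] at hxout
            push_neg at hxout
            rintro ⟨p, q⟩
            rcases le_or_gt t x with h | h
            · linarith [hxout h]
            · linarith
        have hτ : ∀ A B, t ≤ A → B ≤ 1 → A < B →
            Set.Ioo A B ∩ Set.Ioo (t + c) (u + c) = ∅ →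
            ∃ c', ∀ z ∈ Set.Ioo A B, ρ z = z + c' := by
          intro A B htA hB1 hAB hdisj
          rcases not_straddle hAB h2 hdisj with h | h
          · exact ⟨u + c - (t + c), fun z hz => by
              rw [hρ, rot_in_left (le_of_lt h2)
                ⟨lt_of_le_of_lt htA hz.1, lt_of_lt_of_le hz.2 h⟩]⟩
          · refine ⟨0, fun z hz => ?_⟩
            rw [hρ, rot_out' (le_of_lt h1) (le_of_lt h2)
              (by rintro ⟨p, q⟩; linarith [hz.1, lt_of_le_of_lt h hz.1]), add_zero]
        have hPieces₁ : PiecesP PieceT f₁ u L :=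
          piecesP_map L u hrest (fun p q hup hq1 hPT =>
            (piece_transform f ρ hS₀ (hS.image (· + c)) hout htu (transl_surj hc)
              hτ p q hup hq1).1 hPT)
        obtain ⟨l, hlen, hmem, hFEq⟩ := ih u f₁ h0u ⟨_, houtfin, hout₁⟩ hPieces₁
        obtain ⟨kρ, hkρmem, hkρ⟩ := rot_comm_inv h0t h1 h2 h3
        refine ⟨kρ :: l, by simpa using Nat.succ_le_succ hlen, ?_, ?_⟩
        · intro k hk
          rcases List.mem_cons.1 hk with rfl | hk
          · exact hkρmem
          · exact hmem k hk
        · have hfeq : f = ρ⁻¹ * f₁ := by rw [hf₁, inv_mul_cancel_left]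
          have hcomb : FEq (ρ⁻¹ * f₁) (kρ * l.prod) := FEq_mul hkρ hFEq
          rw [List.prod_cons, hfeq]
          exact hcomb

end
end FIETProof
namespace FIETProof
open Set
noncomputable section

def QP (f : Equiv.Perm ℝ) (p q : ℝ) : Prop := PieceT f p q ∨ PieceF f p q

lemma engineB : ∀ (L : List ℝ) (t : ℝ) (f : Equiv.Perm ℝ), 0 ≤ t →
    (∃ S₀ : Set ℝ, S₀.Finite ∧ ∀ x, x ∉ Set.Ico t 1 → x ∉ S₀ → f x = x) →
    PiecesP QP f t L →
    ∃ l : List (Equiv.Perm ℝ), (∀ k ∈ l, k ∈ FIETCommutators) ∧ FEq f l.prod := by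
  intro L
  induction L with
  | nil =>
    intro t f h0t houtE hP
    obtain ⟨S₀, hS₀, hout⟩ := houtE
    by_cases ht1 : t < 1
    case neg =>
      refine ⟨[], by simp, ?_⟩
      apply FEq_of_forall hS₀
      intro x hx
      simp only [List.prod_nil, Equiv.Perm.one_apply]
      exact hout x (by rw [Set.mem_Ico]; rintro ⟨hh1, hh2⟩; linarith) hx
    case pos =>
      have hbase : ∀ (g : Equiv.Perm ℝ) (S₀' : Set ℝ), S₀'.Finite →
          (∀ x, x ∉ Set.Ico t 1 → x ∉ S₀' → g x = x) → PieceT g t 1 → FEq g 1 := by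
        intro g S₀' hS₀' hout' hpcT
        obtain ⟨c, S, hS, hc⟩ := hpcT
        have hbd := transl_bound g hS₀' hS hout' le_rfl le_rfl ht1 hc
        have hc0 : c = 0 := by linarith [hbd.1, hbd.2]
        subst hc0
        apply FEq_of_forall ((hS₀'.union hS).union (Set.finite_singleton t))
        intro x hx
        simp only [Set.mem_union, Set.mem_singleton_iff, not_or] at hx
        simp only [Equiv.Perm.one_apply]
        by_cases hxI : x ∈ Set.Ioo t 1
        · rw [hc x hxI hx.1.2, add_zero]
        · refine hout' x ?_ hx.1.1
          rw [Set.mem_Ico]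
          rintro ⟨hh1, hh2⟩
          exact hxI ⟨lt_of_le_of_ne hh1 (Ne.symm hx.2), hh2⟩
      rcases (hP : QP f t 1) with hT | hF
      · exact ⟨[], by simp, by simpa [List.prod_nil] using hbase f S₀ hS₀ hout hT⟩
      · obtain ⟨c, S, hS, hc⟩ := hF
        have hbd := flip_bound f hS₀ hS hout le_rfl le_rfl ht1 hc
        have hu'v' : c - 1 < c - t := by linarith
        set τf := rp (c - 1) (c - t) with hτf
        set f' := τf * f with hf'
        have hout'' : ∀ x, x ∉ Set.Ico t 1 → x ∉ S₀ → f' x = x := by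
          intro x hxI hxS
          rw [hf', Equiv.Perm.mul_apply, hout x hxI hxS, hτf]
          apply rp_out
          rintro ⟨p, q⟩
          rw [Set.mem_Ico] at hxI
          exact hxI ⟨by linarith [hbd.1], by linarith [hbd.2]⟩
        have hT' : PieceT f' t 1 := by
          refine ⟨(c - 1) + (c - t) - c, S, hS, fun x hx hxS => ?_⟩
          rw [hf', Equiv.Perm.mul_apply, hc x hx hxS, hτf,
            rp_in (show c - 1 < c - x by linarith [hx.2]) (show c - x < c - t by linarith [hx.1])]
          ring
        have hFEq1 : FEq f' 1 := hbase f' S₀ hS₀ hout'' hT'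
        obtain ⟨k₁, k₂, hk₁m, hk₂m, hk12⟩ :=
          refl_decomp (by linarith [hbd.1] : (0:ℝ) ≤ c - 1) hu'v' (by linarith [hbd.2])
        refine ⟨[k₁, k₂], ?_, ?_⟩
        · intro k hk
          rcases List.mem_cons.1 hk with rfl | hk
          · exact hk₁m
          · rcases List.mem_cons.1 hk with rfl | hk
            · exact hk₂m
            · exact absurd hk (List.not_mem_nil (a := k))
        · have hfeq : f = τf * f' := by
            rw [hf', ← mul_assoc, hτf, rp_mul_self, one_mul]
          have hcomb : FEq (τf * f') ((k₁ * k₂) * (1 : Equiv.Perm ℝ)) := FEq_mul hk12 hFEq1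
          have hpr : ([k₁, k₂] : List (Equiv.Perm ℝ)).prod = (k₁ * k₂) * 1 := by
            simp [List.prod_cons, mul_assoc]
          rw [hpr, hfeq]
          exact hcomb
  | cons u L ih =>
    intro t f h0t houtE hP
    obtain ⟨S₀, hS₀, hout⟩ := houtE
    obtain ⟨htu', hu1, hpc, hrest⟩ :=
      (hP : t ≤ u ∧ u ≤ 1 ∧ QP f t u ∧ PiecesP QP f u L)
    by_cases htu : t < u
    case neg =>
      have heq : t = u := le_antisymm htu' (not_lt.1 htu)
      subst heq
      exact ih t f h0t ⟨S₀, hS₀, hout⟩ hrest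
    case pos =>
      have h0u : 0 ≤ u := le_trans h0t (le_of_lt htu)
      -- the core rotation step, applied to a map with a translation first piece
      have core : ∀ (g : Equiv.Perm ℝ) (S₀' : Set ℝ), S₀'.Finite →
          (∀ x, x ∉ Set.Ico t 1 → x ∉ S₀' → g x = x) →
          PieceT g t u → PiecesP QP g u L →
          ∃ l : List (Equiv.Perm ℝ), (∀ k ∈ l, k ∈ FIETCommutators) ∧ FEq g l.prod := by
        intro g S₀' hS₀' hout' hpcT hrest'
        obtain ⟨c, S, hS, hc⟩ := hpcT
        by_cases hc0 : c = 0
        · subst hc0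
          have houtfin : (S₀' ∪ S ∪ {t}).Finite :=
            (hS₀'.union hS).union (Set.finite_singleton t)
          have hout₁ : ∀ x, x ∉ Set.Ico u 1 → x ∉ (S₀' ∪ S ∪ {t}) → g x = x := by
            intro x hxI hxS
            simp only [Set.mem_union, Set.mem_singleton_iff, not_or] at hxS
            by_cases hxm : x ∈ Set.Ioo t u
            · rw [hc x hxm hxS.1.2, add_zero]
            · refine hout' x ?_ hxS.1.1
              rw [Set.mem_Ico] at hxI ⊢
              rintro ⟨hh1, hh2⟩
              apply hxI
              refine ⟨?_, hh2⟩
              by_contra hux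
              push_neg at hux
              exact hxm ⟨lt_of_le_of_ne hh1 (Ne.symm hxS.2), hux⟩
          exact ih u g h0u ⟨_, houtfin, hout₁⟩ hrest'
        · have hbd := transl_bound g hS₀' hS hout' le_rfl hu1 htu hc
          have hcpos : 0 < c := lt_of_le_of_ne (by linarith [hbd.1]) (Ne.symm hc0)
          have h1 : t < t + c := by linarith
          have h2 : t + c < u + c := by linarith
          have h3 : u + c ≤ 1 := hbd.2
          set ρ := rot t (t + c) (u + c) with hρ
          set f₁ := ρ * g with hf₁
          have houtfin : (S₀' ∪ S ∪ {t}).Finite :=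
            (hS₀'.union hS).union (Set.finite_singleton t)
          have hout₁ : ∀ x, x ∉ Set.Ico u 1 → x ∉ (S₀' ∪ S ∪ {t}) → f₁ x = x := by
            intro x hxI hxS
            simp only [Set.mem_union, Set.mem_singleton_iff, not_or] at hxS
            rw [hf₁, Equiv.Perm.mul_apply]
            by_cases hxm : x ∈ Set.Ioo t u
            · rw [hc x hxm hxS.1.2, hρ,
                rot_in_right (le_of_lt h1) ⟨by linarith [hxm.1], by linarith [hxm.2]⟩]
              ring
            · have hxout : x ∉ Set.Ico t 1 := by
                rw [Set.mem_Ico] at hxI ⊢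
                rintro ⟨hh1, hh2⟩
                apply hxI
                refine ⟨?_, hh2⟩
                by_contra hux
                push_neg at hux
                exact hxm ⟨lt_of_le_of_ne hh1 (Ne.symm hxS.2), hux⟩
              rw [hout' x hxout hxS.1.1, hρ]
              apply rot_out' (le_of_lt h1) (le_of_lt h2)
              rw [Set.mem_Ico] at hxout
              push_neg at hxout
              rintro ⟨p, q⟩
              rcases le_or_gt t x with h | h
              · linarith [hxout h]
              · linarith
          have hτ : ∀ A B, t ≤ A → B ≤ 1 → A < B →
              Set.Ioo A B ∩ Set.Ioo (t + c) (u + c) = ∅ →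
              ∃ c', ∀ z ∈ Set.Ioo A B, ρ z = z + c' := by
            intro A B htA hB1 hAB hdisj
            rcases not_straddle hAB h2 hdisj with h | h
            · exact ⟨u + c - (t + c), fun z hz => by
                rw [hρ, rot_in_left (le_of_lt h2)
                  ⟨lt_of_le_of_lt htA hz.1, lt_of_lt_of_le hz.2 h⟩]⟩
            · refine ⟨0, fun z hz => ?_⟩
              rw [hρ, rot_out' (le_of_lt h1) (le_of_lt h2)
                (by rintro ⟨p, q⟩; linarith [hz.1, lt_of_le_of_lt h hz.1]), add_zero]
          have hPieces₁ : PiecesP QP f₁ u L := by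
            apply piecesP_map L u hrest'
            intro p q hup hq1 hQ
            have hpt := piece_transform g ρ hS₀' (hS.image (· + c)) hout' htu
              (transl_surj hc) hτ p q hup hq1
            exact hQ.imp hpt.1 hpt.2
          obtain ⟨l, hmem, hFEq⟩ := ih u f₁ h0u ⟨_, houtfin, hout₁⟩ hPieces₁
          obtain ⟨kρ, hkρmem, hkρ⟩ := rot_comm_inv h0t h1 h2 h3
          refine ⟨kρ :: l, ?_, ?_⟩
          · intro k hk
            rcases List.mem_cons.1 hk with rfl | hk
            · exact hkρmem
            · exact hmem k hk
          · have hfeq : g = ρ⁻¹ * f₁ := by rw [hf₁, inv_mul_cancel_left]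
            have hcomb : FEq (ρ⁻¹ * f₁) (kρ * l.prod) := FEq_mul hkρ hFEq
            rw [List.prod_cons, hfeq]
            exact hcomb
      rcases hpc with hT | hF
      · exact core f S₀ hS₀ hout hT hrest
      · obtain ⟨c, S, hS, hc⟩ := hF
        have hbd := flip_bound f hS₀ hS hout le_rfl hu1 htu hc
        have hu'v' : c - u < c - t := by linarith
        set τf := rp (c - u) (c - t) with hτf
        set f' := τf * f with hf'
        have hout'' : ∀ x, x ∉ Set.Ico t 1 → x ∉ S₀ → f' x = x := by
          intro x hxI hxS
          rw [hf', Equiv.Perm.mul_apply, hout x hxI hxS, hτf]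
          apply rp_out
          rintro ⟨p, q⟩
          rw [Set.mem_Ico] at hxI
          exact hxI ⟨by linarith [hbd.1], by linarith [hbd.2]⟩
        have hT' : PieceT f' t u := by
          refine ⟨(c - u) + (c - t) - c, S, hS, fun x hx hxS => ?_⟩
          rw [hf', Equiv.Perm.mul_apply, hc x hx hxS, hτf,
            rp_in (show c - u < c - x by linarith [hx.2]) (show c - x < c - t by linarith [hx.1])]
          ring
        have hτprop : ∀ A B, t ≤ A → B ≤ 1 → A < B →
            Set.Ioo A B ∩ Set.Ioo (c - u) (c - t) = ∅ →
            ∃ c', ∀ z ∈ Set.Ioo A B, τf z = z + c' := by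
          intro A B htA hB1 hAB hdisj
          refine ⟨0, fun z hz => ?_⟩
          rw [hτf, rp_out (show ¬(c - u < z ∧ z < c - t) from fun hm => by
            have : z ∈ Set.Ioo A B ∩ Set.Ioo (c - u) (c - t) := ⟨hz, hm⟩
            rw [hdisj] at this
            exact this), add_zero]
        have hrest'' : PiecesP QP f' u L := by
          apply piecesP_map L u hrest
          intro p q hup hq1 hQ
          have hpt := piece_transform f τf hS₀ (hS.image (c - ·)) hout htu
            (flip_surj hc) hτprop p q hup hq1
          exact hQ.imp hpt.1 hpt.2
        obtain ⟨l, hmem, hFEq⟩ := core f' S₀ hS₀ hout'' hT' hrest''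
        obtain ⟨k₁, k₂, hk₁m, hk₂m, hk12⟩ :=
          refl_decomp (by linarith [hbd.1] : (0:ℝ) ≤ c - u) hu'v' (by linarith [hbd.2])
        refine ⟨k₁ :: k₂ :: l, ?_, ?_⟩
        · intro k hk
          rcases List.mem_cons.1 hk with rfl | hk
          · exact hk₁m
          · rcases List.mem_cons.1 hk with rfl | hk
            · exact hk₂m
            · exact hmem k hk
        · have hfeq : f = τf * f' := by
            rw [hf', ← mul_assoc, hτf, rp_mul_self, one_mul]
          have hcomb : FEq (τf * f') ((k₁ * k₂) * l.prod) := FEq_mul hk12 hFEq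
          have hpr : (k₁ :: k₂ :: l).prod = (k₁ * k₂) * l.prod := by
            rw [List.prod_cons, List.prod_cons, mul_assoc]
          rw [hpr, hfeq]
          exact hcomb

end
end FIETProof
namespace FIETProof
open Set
noncomputable section

lemma conv {P : Equiv.Perm ℝ → ℝ → ℝ → Prop} {f : Equiv.Perm ℝ} {k : ℕ} (A : ℕ → ℝ)
    (hA1 : A (k + 1) = 1)
    (hmono : ∀ j, j ≤ k → A j ≤ A (j + 1))
    (hle1 : ∀ j, j ≤ k → A (j + 1) ≤ 1)
    (hp : ∀ j, j ≤ k → P f (A j) (A (j + 1))) :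
    ∀ d j, j + d = k → PiecesP P f (A j) ((List.range' (j + 1) d).map A) := by
  intro d
  induction d with
  | zero =>
    intro j hj
    have hjk : j = k := by omega
    subst hjk
    show P f (A j) 1
    rw [← hA1]
    exact hp j le_rfl
  | succ d ihd =>
    intro j hj
    have hd : List.range' (j + 1) (d + 1) = (j + 1) :: List.range' (j + 2) d := by
      rw [List.range'_succ]
    rw [hd, List.map_cons]
    exact ⟨hmono j (by omega), hle1 j (by omega), hp j (by omega), ihd (j + 1) (by omega)⟩

end
end FIETProof

set_option maxHeartbeats 2000000 in
/-- The group `𝒢̄` is perfect, and every `g ∈ 𝒢_m` (`m ≥ 2`), viewed in `𝒢̄`, is a product of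
at most `m - 1` commutators of elements of `𝒢̄`. -/
theorem FIET_perfect_and_Gm_commutator_bound :
    (∀ f : Equiv.Perm ℝ, IsFIET f →
      ∃ l : List (Equiv.Perm ℝ), (∀ x ∈ l, x ∈ FIETCommutators) ∧ FEq f l.prod) ∧
    ∀ (m : ℕ), 2 ≤ m → ∀ g : Equiv.Perm ℝ, MemGm m g →
      ∃ l : List (Equiv.Perm ℝ), l.length ≤ m - 1 ∧
        (∀ x ∈ l, x ∈ FIETCommutators) ∧ FEq g l.prod := by
  open FIETProof in
  constructor
  · intro f hf
    obtain ⟨hout, k, a, ha0, halast, hmono, hpieces⟩ := hf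
    set A : ℕ → ℝ := fun j => if h : j < k + 2 then a ⟨j, h⟩ else 1 with hA
    have hAval : ∀ j (h : j < k + 2), A j = a ⟨j, h⟩ := by
      intro j h; rw [hA]; exact dif_pos h
    have hA1 : A (k + 1) = 1 := by
      rw [hAval (k + 1) (by omega)]
      exact halast
    have hmono' : ∀ j, j ≤ k → A j ≤ A (j + 1) := by
      intro j hj
      rw [hAval j (by omega), hAval (j + 1) (by omega)]
      exact le_of_lt (hmono (by rw [Fin.mk_lt_mk]; omega))
    have hle1 : ∀ j, j ≤ k → A (j + 1) ≤ 1 := by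
      intro j hj
      rw [hAval (j + 1) (by omega), ← halast]
      exact hmono.monotone (by rw [Fin.le_def]; simp [Fin.last]; omega)
    have hp : ∀ j, j ≤ k → QP f (A j) (A (j + 1)) := by
      intro j hj
      have hcast : (⟨j, by omega⟩ : Fin (k + 1)).castSucc = (⟨j, by omega⟩ : Fin (k + 2)) :=
        rfl
      have hsucc : (⟨j, by omega⟩ : Fin (k + 1)).succ = (⟨j + 1, by omega⟩ : Fin (k + 2)) :=
        rfl
      have := hpieces ⟨j, by omega⟩
      rw [hcast, hsucc] at this
      rw [hAval j (by omega), hAval (j + 1) (by omega)]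
      exact this.imp
        (fun ⟨c, h⟩ => ⟨c, ∅, Set.finite_empty, fun x hx _ => h x hx⟩)
        (fun ⟨c, h⟩ => ⟨c, ∅, Set.finite_empty, fun x hx _ => h x hx⟩)
    have hP : PiecesP QP f (A 0) ((List.range' 1 k).map A) :=
      conv A hA1 hmono' hle1 hp k 0 (by omega)
    have hA0 : A 0 = 0 := by
      rw [hAval 0 (by omega)]
      have h00 : (⟨0, by omega⟩ : Fin (k + 2)) = 0 := by ext; simp
      rw [h00, ha0]
    rw [hA0] at hP
    exact engineB _ 0 f le_rfl ⟨∅, Set.finite_empty, fun x hx _ => hout x hx⟩ hP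
  · intro m hm g hg
    obtain ⟨hout, k, a, hk1m, ha0, halast, hmono, hpieces⟩ := hg
    set A : ℕ → ℝ := fun j => if h : j < k + 2 then a ⟨j, h⟩ else 1 with hA
    have hAval : ∀ j (h : j < k + 2), A j = a ⟨j, h⟩ := by
      intro j h; rw [hA]; exact dif_pos h
    have hA1 : A (k + 1) = 1 := by
      rw [hAval (k + 1) (by omega)]
      exact halast
    have hmono' : ∀ j, j ≤ k → A j ≤ A (j + 1) := by
      intro j hj
      rw [hAval j (by omega), hAval (j + 1) (by omega)]
      exact le_of_lt (hmono (by rw [Fin.mk_lt_mk]; omega))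
    have hle1 : ∀ j, j ≤ k → A (j + 1) ≤ 1 := by
      intro j hj
      rw [hAval (j + 1) (by omega), ← halast]
      exact hmono.monotone (by rw [Fin.le_def]; simp [Fin.last]; omega)
    have hp : ∀ j, j ≤ k → PieceT g (A j) (A (j + 1)) := by
      intro j hj
      have hcast : (⟨j, by omega⟩ : Fin (k + 1)).castSucc = (⟨j, by omega⟩ : Fin (k + 2)) :=
        rfl
      have hsucc : (⟨j, by omega⟩ : Fin (k + 1)).succ = (⟨j + 1, by omega⟩ : Fin (k + 2)) :=
        rfl
      obtain ⟨c, hc⟩ := hpieces ⟨j, by omega⟩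
      rw [hcast, hsucc] at hc
      rw [hAval j (by omega), hAval (j + 1) (by omega)]
      exact ⟨c, ∅, Set.finite_empty, fun x hx _ => hc x (Set.Ioo_subset_Ico_self hx)⟩
    have hP : PiecesP PieceT g (A 0) ((List.range' 1 k).map A) :=
      conv A hA1 hmono' hle1 hp k 0 (by omega)
    have hA0 : A 0 = 0 := by
      rw [hAval 0 (by omega)]
      have h00 : (⟨0, by omega⟩ : Fin (k + 2)) = 0 := by ext; simp
      rw [h00, ha0]
    rw [hA0] at hP
    obtain ⟨l, hlen, hmem, hFEq⟩ :=
      engineA _ 0 g le_rfl ⟨∅, Set.finite_empty, fun x hx _ => hout x hx⟩ hP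
    refine ⟨l, ?_, hmem, hFEq⟩
    have hlL : ((List.range' 1 k).map A).length = k := by
      rw [List.length_map, List.length_range']
    rw [hlL] at hlen
    omega
end

section
/- Let G be a group, H a subgroup of G, and R ∈ G such that every element of H commutes with every element of R·H·R⁻¹. Let p ≥ 1 and let g ∈ H be a product of at most 2p commutators of elements of H. Then g is a product of at most p+1 commutators of elements of G. -/
open scoped commutatorElement

private lemma aux_comm_mul {G : Type*} [Group G] (a b c d : G)
    (hac : Commute a c) (had : Commute a d) (hbc : Commute b c) (hbd : Commute b d) :
    ⁅a, b⁆ * ⁅c, d⁆ = ⁅a * c, b * d⁆ := by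
  have h1 : Commute b⁻¹ (c * d * c⁻¹ * d⁻¹) :=
    (((hbc.mul_right hbd).mul_right hbc.inv_right).mul_right hbd.inv_right).inv_left
  symm
  calc ⁅a * c, b * d⁆
      = a * (c * b) * d * c⁻¹ * a⁻¹ * d⁻¹ * b⁻¹ := by group
    _ = a * (b * c) * d * c⁻¹ * a⁻¹ * d⁻¹ * b⁻¹ := by rw [← hbc.eq]
    _ = a * b * c * d * (c⁻¹ * a⁻¹) * d⁻¹ * b⁻¹ := by group
    _ = a * b * c * d * (a⁻¹ * c⁻¹) * d⁻¹ * b⁻¹ := by rw [← hac.inv_inv.eq]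
    _ = a * b * c * (d * a⁻¹) * c⁻¹ * d⁻¹ * b⁻¹ := by group
    _ = a * b * c * (a⁻¹ * d) * c⁻¹ * d⁻¹ * b⁻¹ := by rw [← had.inv_left.eq]
    _ = a * b * (c * a⁻¹) * d * c⁻¹ * d⁻¹ * b⁻¹ := by group
    _ = a * b * (a⁻¹ * c) * d * c⁻¹ * d⁻¹ * b⁻¹ := by rw [← hac.inv_left.eq]
    _ = a * b * a⁻¹ * (c * d * c⁻¹ * d⁻¹ * b⁻¹) := by group
    _ = a * b * a⁻¹ * (b⁻¹ * (c * d * c⁻¹ * d⁻¹)) := by rw [← h1.eq]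
    _ = ⁅a, b⁆ * ⁅c, d⁆ := by group

private lemma key_lemma {G : Type*} [Group G] (H : Subgroup G) (R : G)
    (hcomm : ∀ h₁ ∈ H, ∀ h₂ ∈ H, Commute h₁ (R * h₂ * R⁻¹)) :
    ∀ (l₁ l₂ : List G), l₁.length = l₂.length →
      (∀ x ∈ l₁, ∃ a ∈ H, ∃ b ∈ H, x = ⁅a, b⁆) →
      (∀ x ∈ l₂, ∃ a ∈ H, ∃ b ∈ H, x = ⁅a, b⁆) →
      ∃ m : List G, m.length = l₁.length ∧ (∀ x ∈ m, ∃ a b : G, x = ⁅a, b⁆) ∧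
        m.prod = l₁.prod * (R * l₂.prod * R⁻¹) := by
  intro l₁
  induction l₁ with
  | nil =>
    intro l₂ hlen _ _
    have : l₂ = [] := List.length_eq_zero_iff.mp hlen.symm
    subst this
    exact ⟨[], rfl, by simp, by simp⟩
  | cons x t₁ ih =>
    intro l₂ hlen h₁ h₂
    match l₂, hlen with
    | y :: t₂, hlen =>
      have hlen' : t₁.length = t₂.length := by simpa using hlen
      obtain ⟨a, ha, b, hb, hx⟩ := h₁ x (by simp)
      obtain ⟨c, hc, d, hd, hy⟩ := h₂ y (by simp)
      obtain ⟨m, hmlen, hmcomm, hmprod⟩ := ih t₂ hlen'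
        (fun z hz => h₁ z (by simp [hz])) (fun z hz => h₂ z (by simp [hz]))
      -- t₁.prod ∈ H
      have ht₁ : t₁.prod ∈ H := by
        apply Subgroup.list_prod_mem
        intro z hz
        obtain ⟨a', ha', b', hb', hz'⟩ := h₁ z (by simp [hz])
        exact hz' ▸ H.mul_mem (H.mul_mem (H.mul_mem ha' hb') (H.inv_mem ha')) (H.inv_mem hb')
      have hyH : y ∈ H := hy ▸
        H.mul_mem (H.mul_mem (H.mul_mem hc hd) (H.inv_mem hc)) (H.inv_mem hd)
      refine ⟨⁅a * (R * c * R⁻¹), b * (R * d * R⁻¹)⁆ :: m, by simp [hmlen], ?_, ?_⟩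
      · intro z hz
        rcases List.mem_cons.mp hz with hz | hz
        · exact ⟨_, _, hz⟩
        · exact hmcomm z hz
      · have hcc : ⁅a, b⁆ * ⁅R * c * R⁻¹, R * d * R⁻¹⁆
            = ⁅a * (R * c * R⁻¹), b * (R * d * R⁻¹)⁆ :=
          aux_comm_mul _ _ _ _ (hcomm a ha c hc) (hcomm a ha d hd)
            (hcomm b hb c hc) (hcomm b hb d hd)
      -- prod goal
        have hcomm2 : Commute t₁.prod (R * y * R⁻¹) := hcomm _ ht₁ _ hyH
        calc (⁅a * (R * c * R⁻¹), b * (R * d * R⁻¹)⁆ :: m).prod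
            = (⁅a, b⁆ * ⁅R * c * R⁻¹, R * d * R⁻¹⁆) * m.prod := by
              rw [List.prod_cons, hcc]
          _ = ⁅a, b⁆ * (R * ⁅c, d⁆ * R⁻¹) * (t₁.prod * (R * t₂.prod * R⁻¹)) := by
              rw [hmprod, conjugate_commutatorElement]
          _ = x * ((R * y * R⁻¹) * t₁.prod) * (R * t₂.prod * R⁻¹) := by
              rw [hx, hy]; group
          _ = x * (t₁.prod * (R * y * R⁻¹)) * (R * t₂.prod * R⁻¹) := by
              rw [hcomm2.eq]
          _ = (x :: t₁).prod * (R * (y :: t₂).prod * R⁻¹) := by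
              simp only [List.prod_cons]; group

/-- Dennis–Vaserstein type lemma: if every element of a subgroup `H` of `G` commutes with every
element of `R • H • R⁻¹` and `g ∈ H` is a product of at most `2p` commutators of elements of
`H`, then `g` is a product of at most `p + 1` commutators of elements of `G`. -/
theorem commutator_length_halving {G : Type*} [Group G] (H : Subgroup G) (R : G)
    (hcomm : ∀ h₁ ∈ H, ∀ h₂ ∈ H, Commute h₁ (R * h₂ * R⁻¹))
    (p : ℕ) (hp : 1 ≤ p) (g : G) (hg : g ∈ H)
    (hprod : ∃ l : List G, l.length ≤ 2 * p ∧
      (∀ x ∈ l, ∃ a ∈ H, ∃ b ∈ H, x = ⁅a, b⁆) ∧ g = l.prod) :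
    ∃ l : List G, l.length ≤ p + 1 ∧ (∀ x ∈ l, ∃ a b : G, x = ⁅a, b⁆) ∧ g = l.prod := by
  obtain ⟨l, hlen, hl, hgl⟩ := hprod
  -- pad l to length exactly 2*p
  set l' : List G := l ++ List.replicate (2 * p - l.length) 1 with hl'def
  have hl'len : l'.length = 2 * p := by
    simp [hl'def, Nat.add_sub_cancel' hlen]
  have hl'mem : ∀ x ∈ l', ∃ a ∈ H, ∃ b ∈ H, x = ⁅a, b⁆ := by
    intro x hx
    rcases List.mem_append.mp hx with hx | hx
    · exact hl x hx
    · have : x = 1 := List.eq_of_mem_replicate hx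
      exact ⟨1, H.one_mem, 1, H.one_mem, by simp [this]⟩
  have hl'prod : l'.prod = g := by
    simp [hl'def, List.prod_replicate, hgl]
  set l₁ := l'.take p with h1def
  set l₂ := l'.drop p with h2def
  have hlen1 : l₁.length = p := by
    simp [h1def, hl'len]; omega
  have hlen2 : l₂.length = p := by
    simp [h2def, hl'len]; omega
  obtain ⟨m, hmlen, hmcomm, hmprod⟩ := key_lemma H R hcomm l₁ l₂ (by rw [hlen1, hlen2])
    (fun x hx => hl'mem x (List.mem_of_mem_take hx))
    (fun x hx => hl'mem x (List.mem_of_mem_drop hx))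
  refine ⟨m ++ [⁅R, l₂.prod⁻¹⁆], by simp [hmlen, hlen1], ?_, ?_⟩
  · intro x hx
    rcases List.mem_append.mp hx with hx | hx
    · exact hmcomm x hx
    · simp at hx
      exact ⟨_, _, hx⟩
  · have : l₁.prod * l₂.prod = g := by
      rw [← hl'prod, h1def, h2def, ← List.prod_append, List.take_append_drop]
    rw [List.prod_append, List.prod_singleton, hmprod, ← this,
      commutatorElement_def]
    group
end

section
/- Let t ≥ 1 and let H̄_{2^t} denote the subgroup of 𝒢̄ consisting of elements represented by an FIET that fixes every point of [0, 1 − 2^{−t}). If g ∈ H̄_{2^t} is a product of c commutators of elements of H̄_{2^t}, then g is a product of strictly fewer than c/2^t + 3 commutators of elements of 𝒢̄; i.e. c_𝒢̄(g) < c_{H̄_{2^t}}(g)/2^t + 3. -/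
open scoped commutatorElement

theorem Equiv.Perm.apply_inv_self {α : Type*} (f : Equiv.Perm α) (x : α) : f (f⁻¹ x) = x :=
  Equiv.apply_symm_apply f x

namespace DV

open Set

/-- `f` is supported in `A`. -/
def Supp (A : Set ℝ) (f : Equiv.Perm ℝ) : Prop := ∀ x, x ∉ A → f x = x

theorem Supp.mem_or {A : Set ℝ} {f : Equiv.Perm ℝ} (hf : Supp A f) (x : ℝ) :
    f x ∈ A ∨ f x = x := by
  by_cases h : f x ∈ A
  · exact Or.inl h
  · exact Or.inr (f.injective (hf (f x) h))

theorem Supp.one (A : Set ℝ) : Supp A (1 : Equiv.Perm ℝ) := fun x _ => rfl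

theorem Supp.mul {A : Set ℝ} {f g : Equiv.Perm ℝ} (hf : Supp A f) (hg : Supp A g) :
    Supp A (f * g) := by
  intro x hx
  rw [Equiv.Perm.mul_apply, hg x hx, hf x hx]

theorem Supp.inv {A : Set ℝ} {f : Equiv.Perm ℝ} (hf : Supp A f) : Supp A f⁻¹ := by
  intro x hx
  apply f.injective
  rw [Equiv.Perm.apply_inv_self, hf x hx]

theorem Supp.mono {A B : Set ℝ} (hAB : A ⊆ B) {f : Equiv.Perm ℝ} (hf : Supp A f) :
    Supp B f := fun x hx => hf x (fun h => hx (hAB h))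

theorem Supp.conj {A B : Set ℝ} {f h : Equiv.Perm ℝ} (hf : Supp A f)
    (hmap : ∀ y ∈ A, h y ∈ B) : Supp B (h * f * h⁻¹) := by
  intro x hx
  simp only [Equiv.Perm.mul_apply]
  have : f (h⁻¹ x) = h⁻¹ x := by
    apply hf
    intro hmem
    exact hx (by simpa using hmap _ hmem)
  rw [this, Equiv.Perm.apply_inv_self]

theorem Supp.commute {A B : Set ℝ} {f g : Equiv.Perm ℝ} (hf : Supp A f) (hg : Supp B g)
    (hd : Disjoint A B) : Commute f g := by
  have hAB : ∀ x ∈ A, x ∉ B := fun x hx hx' => (Set.disjoint_left.mp hd) hx hx'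
  have hBA : ∀ x ∈ B, x ∉ A := fun x hx hx' => (Set.disjoint_left.mp hd) hx' hx
  apply Equiv.ext
  intro x
  simp only [Equiv.Perm.mul_apply]
  by_cases hxA : x ∈ A
  · have hxB : x ∉ B := hAB x hxA
    have hgx : g x = x := hg x hxB
    rw [hgx]
    rcases hf.mem_or x with hfA | hfx
    · rw [hg (f x) (hAB _ hfA)]
    · rw [hfx, hgx]
  · have hfx : f x = x := hf x hxA
    rw [hfx]
    rcases hg.mem_or x with hgB | hgx
    · rw [hf (g x) (fun h => hBA _ hgB h)]
    · rw [hgx, hfx]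

end DV


namespace DV

section PiLemmas
variable {G : Type*} [Group G]

/-- ordered product `f 0 * f 1 * ⋯ * f (n-1)`. -/
def Pi' (n : ℕ) (f : ℕ → G) : G := ((List.range n).map f).prod

theorem Pi'_zero (f : ℕ → G) : Pi' 0 f = 1 := rfl

theorem Pi'_succ (n : ℕ) (f : ℕ → G) : Pi' (n + 1) f = Pi' n f * f n := by
  simp [Pi', List.range_succ]

theorem Pi'_succ' (n : ℕ) (f : ℕ → G) : Pi' (n + 1) f = f 0 * Pi' n (fun k => f (k + 1)) := by
  simp only [Pi', List.range_succ_eq_map, List.map_cons, List.map_map, List.prod_cons]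
  rfl

theorem Pi'_congr {n : ℕ} {f g : ℕ → G} (h : ∀ k < n, f k = g k) : Pi' n f = Pi' n g := by
  unfold Pi'
  congr 1
  exact List.map_congr_left (fun a ha => h a (List.mem_range.mp ha))

theorem Pi'_one (n : ℕ) : Pi' n (fun _ => (1 : G)) = 1 := by
  simp [Pi']

theorem Pi'_add (a b : ℕ) (f : ℕ → G) :
    Pi' (a + b) f = Pi' a f * Pi' b (fun i => f (a + i)) := by
  simp only [Pi', List.range_add, List.map_append, List.map_map, List.prod_append]
  rfl

theorem Commute.pi'_right {n : ℕ} {f : ℕ → G} {y : G} (h : ∀ k < n, Commute y (f k)) :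
    Commute y (Pi' n f) := by
  apply Commute.list_prod_right
  intro x hx
  simp only [List.mem_map, List.mem_range] at hx
  obtain ⟨k, hk, rfl⟩ := hx
  exact h k hk

theorem Pi'_mul {n : ℕ} {u w : ℕ → G} (h : ∀ j < n, ∀ k < n, j ≠ k → Commute (u j) (w k)) :
    Pi' n u * Pi' n w = Pi' n (fun k => u k * w k) := by
  induction n with
  | zero => simp [Pi'_zero]
  | succ n ih =>
    have hc : Commute (u n) (Pi' n w) :=
      Commute.pi'_right (fun k hk => h n (Nat.lt_succ_self n) k (Nat.lt_succ_of_lt hk)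
        (by omega))
    rw [Pi'_succ, Pi'_succ, Pi'_succ]
    calc Pi' n u * u n * (Pi' n w * w n)
        = Pi' n u * (u n * Pi' n w) * w n := by group
      _ = Pi' n u * (Pi' n w * u n) * w n := by rw [hc.eq]
      _ = (Pi' n u * Pi' n w) * (u n * w n) := by group
      _ = Pi' n (fun k => u k * w k) * (u n * w n) := by
          rw [ih (fun j hj k hk hjk => h j (Nat.lt_succ_of_lt hj) k (Nat.lt_succ_of_lt hk) hjk)]

theorem Pi'_inv {n : ℕ} {u : ℕ → G} (h : ∀ j < n, ∀ k < n, j ≠ k → Commute (u j) (u k)) :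
    (Pi' n u)⁻¹ = Pi' n (fun k => (u k)⁻¹) := by
  induction n with
  | zero => simp [Pi'_zero]
  | succ n ih =>
    have hc : Commute (u n)⁻¹ (Pi' n (fun k => (u k)⁻¹)) :=
      Commute.pi'_right (fun k hk =>
        ((h n (Nat.lt_succ_self n) k (Nat.lt_succ_of_lt hk) (by omega)).inv_left).inv_right)
    rw [Pi'_succ, mul_inv_rev, ih (fun j hj k hk hjk =>
      h j (Nat.lt_succ_of_lt hj) k (Nat.lt_succ_of_lt hk) hjk), hc.eq, Pi'_succ]

theorem Pi'_swap {n m : ℕ} {e : ℕ → ℕ → G}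
    (h : ∀ k < n, ∀ k' < n, k ≠ k' → ∀ j < m, ∀ j' < m, Commute (e k j) (e k' j')) :
    Pi' n (fun k => Pi' m (fun j => e k j)) = Pi' m (fun j => Pi' n (fun k => e k j)) := by
  induction n with
  | zero => rw [Pi'_zero, ← Pi'_one m]; rfl
  | succ n ih =>
    rw [Pi'_succ, ih (fun k hk k' hk' hkk' => h k (Nat.lt_succ_of_lt hk) k'
      (Nat.lt_succ_of_lt hk') hkk'), Pi'_mul]
    · exact Pi'_congr (fun j hj => (Pi'_succ n (fun k => e k j)).symm)
    · intro j hj j' hj' hjj'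
      apply Commute.list_prod_left
      intro x hx
      simp only [List.mem_map, List.mem_range] at hx
      obtain ⟨k, hk, rfl⟩ := hx
      exact h k (Nat.lt_succ_of_lt hk) n (Nat.lt_succ_self n) (by omega) j hj j' hj'

theorem Pi'_commutator {n : ℕ} {u w : ℕ → G}
    (h : ∀ j < n, ∀ k < n, j ≠ k →
      Commute (u j) (u k) ∧ Commute (u j) (w k) ∧ Commute (w j) (u k) ∧ Commute (w j) (w k)) :
    ⁅Pi' n u, Pi' n w⁆ = Pi' n (fun k => ⁅u k, w k⁆) := by
  rw [commutatorElement_def]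
  rw [Pi'_inv (fun j hj k hk hjk => (h j hj k hk hjk).1),
      Pi'_inv (fun j hj k hk hjk => (h j hj k hk hjk).2.2.2),
      Pi'_mul (fun j hj k hk hjk => (h j hj k hk hjk).2.1),
      Pi'_mul (fun j hj k hk hjk =>
        ((h j hj k hk hjk).1.inv_right).mul_left ((h j hj k hk hjk).2.2.1.inv_right)),
      Pi'_mul (fun j hj k hk hjk =>
        (((h j hj k hk hjk).2.1.inv_right).mul_left
          ((h j hj k hk hjk).2.2.2.inv_right)).mul_left
          ((h j hj k hk hjk).2.1.inv_left.inv_right))]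
  exact Pi'_congr (fun k _ => (commutatorElement_def _ _).symm)

theorem Pi'_flatten (n m : ℕ) (f : ℕ → G) :
    Pi' n (fun k => Pi' m (fun j => f (k * m + j))) = Pi' (n * m) f := by
  induction n with
  | zero => simp [Pi'_zero]
  | succ n ih =>
    rw [Pi'_succ, ih, Nat.succ_mul, Pi'_add]

theorem Pi'_trunc {c M : ℕ} (hcM : c ≤ M) {f : ℕ → G} (h1 : ∀ k, c ≤ k → f k = 1) :
    Pi' M f = Pi' c f := by
  induction M, hcM using Nat.le_induction with
  | base => rfl
  | succ M hM ih => rw [Pi'_succ, h1 M hM, mul_one, ih]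

theorem Pi'_conj (n : ℕ) (f : ℕ → G) (g : G) :
    g * Pi' n f * g⁻¹ = Pi' n (fun k => g * f k * g⁻¹) := by
  induction n with
  | zero => simp [Pi'_zero]
  | succ n ih => rw [Pi'_succ, Pi'_succ, ← ih]; group

theorem Pi'_ofFn (n : ℕ) (f : ℕ → G) :
    (List.ofFn fun i : Fin n => f i).prod = Pi' n f := by
  induction n generalizing f with
  | zero => rfl
  | succ n ih =>
    rw [List.ofFn_succ, List.prod_cons, Pi'_succ']
    simp only [Fin.val_succ, Fin.val_zero]
    rw [ih (fun k => f (k + 1))]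

end PiLemmas
end DV


namespace DV
open Set

/-- the rotation of `[0,1)` by `β`, as a function. -/
noncomputable def rotFun (β : ℝ) (x : ℝ) : ℝ :=
  if x < 0 then x else if 1 ≤ x then x else if x + β < 1 then x + β else x + β - 1

/-- the rotation of `[0,1)` by `β ∈ (0,1)`, as a permutation of `ℝ`. -/
noncomputable def rot (β : ℝ) (h0 : 0 < β) (h1 : β < 1) : Equiv.Perm ℝ where
  toFun := rotFun β
  invFun := rotFun (1 - β)
  left_inv := by
    intro x
    simp only [rotFun]
    split_ifs <;> linarith
  right_inv := by
    intro x
    simp only [rotFun]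
    split_ifs <;> linarith

theorem rot_apply (β : ℝ) (h0 : 0 < β) (h1 : β < 1) (x : ℝ) :
    rot β h0 h1 x = if x < 0 then x else if 1 ≤ x then x
      else if x + β < 1 then x + β else x + β - 1 := rfl

theorem rot_apply_hi (β : ℝ) (h0 : 0 < β) (h1 : β < 1) {x : ℝ}
    (hx : 1 - β ≤ x) (hx1 : x < 1) : rot β h0 h1 x = x + β - 1 := by
  rw [rot_apply, if_neg (by linarith), if_neg (by linarith), if_neg (by linarith)]

theorem rot_fix (β : ℝ) (h0 : 0 < β) (h1 : β < 1) {x : ℝ} (hx : x ∉ Set.Ico (0:ℝ) 1) :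
    rot β h0 h1 x = x := by
  simp only [Set.mem_Ico, not_and, not_lt] at hx
  rw [rot_apply]
  rcases lt_or_ge x 0 with h | h
  · rw [if_pos h]
  · rw [if_neg (by linarith), if_pos (hx h)]

/-- total version of `rot`. -/
noncomputable def rot' (β : ℝ) : Equiv.Perm ℝ :=
  if h : 0 < β ∧ β < 1 then rot β h.1 h.2 else 1

theorem rot'_eq (β : ℝ) (h0 : 0 < β) (h1 : β < 1) : rot' β = rot β h0 h1 :=
  dif_pos ⟨h0, h1⟩

theorem rot'_of_not {β : ℝ} (h : ¬(0 < β ∧ β < 1)) : rot' β = 1 := dif_neg h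

theorem rot'_zero : rot' 0 = 1 := rot'_of_not (by simp)

theorem rot'_add {α β : ℝ} (h0 : 0 < α) (h0' : 0 ≤ β) (h1 : α + β < 1) :
    rot' α * rot' β = rot' (α + β) := by
  rcases eq_or_lt_of_le h0' with rfl | hb
  · rw [rot'_zero, mul_one, add_zero]
  · rw [rot'_eq α h0 (by linarith), rot'_eq β hb (by linarith), rot'_eq (α+β) (by linarith) h1]
    apply Equiv.ext
    intro x
    simp only [Equiv.Perm.mul_apply]
    show rotFun α (rotFun β x) = rotFun (α + β) x
    simp only [rotFun]
    split_ifs <;> linarith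

theorem isFIET_rot (β : ℝ) (h0 : 0 < β) (h1 : β < 1) : IsFIET (rot β h0 h1) := by
  constructor
  · intro x hx
    exact rot_fix β h0 h1 hx
  · refine ⟨1, fun i : Fin 3 => if (i : ℕ) = 0 then 0 else if (i : ℕ) = 1 then 1 - β else 1,
      by norm_num, by norm_num [Fin.last], ?_, ?_⟩
    · rw [Fin.strictMono_iff_lt_succ]
      intro i
      rcases i with ⟨iv, hi⟩
      interval_cases iv <;> norm_num [Fin.castSucc_mk, Fin.succ_mk] <;> linarith
    · intro i
      rcases i with ⟨iv, hi⟩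
      interval_cases iv
      · left
        refine ⟨β, fun x hx => ?_⟩
        simp only [Fin.castSucc_mk, Fin.succ_mk, Set.mem_Ioo] at hx
        norm_num at hx
        obtain ⟨hx0, hx1⟩ := hx
        rw [rot_apply, if_neg (by linarith), if_neg (by push_neg; linarith),
          if_pos (by linarith)]
      · left
        refine ⟨β - 1, fun x hx => ?_⟩
        simp only [Fin.castSucc_mk, Fin.succ_mk, Set.mem_Ioo] at hx
        norm_num at hx
        obtain ⟨hx0, hx1⟩ := hx
        rw [rot_apply, if_neg (by linarith), if_neg (by push_neg; linarith),
          if_neg (by push_neg; linarith)]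
        ring

end DV


namespace DV
open Set

/-- `f` acts as an isometry on the open interval `(u,v)`. -/
def GoodOn (f : Equiv.Perm ℝ) (u v : ℝ) : Prop :=
  (∃ c : ℝ, ∀ x ∈ Set.Ioo u v, f x = x + c) ∨ (∃ c : ℝ, ∀ x ∈ Set.Ioo u v, f x = c - x)

theorem GoodOn.mono {f : Equiv.Perm ℝ} {u v u' v' : ℝ} (h : GoodOn f u v)
    (hsub : Set.Ioo u' v' ⊆ Set.Ioo u v) : GoodOn f u' v' := by
  rcases h with ⟨c, hc⟩ | ⟨c, hc⟩
  · exact Or.inl ⟨c, fun x hx => hc x (hsub hx)⟩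
  · exact Or.inr ⟨c, fun x hx => hc x (hsub hx)⟩

theorem exists_piece {m : ℕ} {a : Fin (m + 2) → ℝ} (ha : StrictMono a) {z : ℝ}
    (h0 : a 0 < z) (h1 : z < a (Fin.last (m + 1))) (hz : ∀ i, a i ≠ z) :
    ∃ i : Fin (m + 1), a i.castSucc < z ∧ z < a i.succ := by
  classical
  set T : Finset (Fin (m + 2)) := Finset.univ.filter (fun j => a j < z) with hT
  have hne : T.Nonempty := ⟨0, by simp [hT, h0]⟩
  set j := T.max' hne with hj
  have haj : a j < z := by
    have := T.max'_mem hne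
    simp [hT] at this
    exact this
  have hjlast : j ≠ Fin.last (m + 1) := by
    intro h
    rw [h] at haj
    exact absurd h1 (not_lt.mpr haj.le)
  obtain ⟨i, hi⟩ := Fin.exists_castSucc_eq.mpr hjlast
  refine ⟨i, hi ▸ haj, ?_⟩
  rcases lt_trichotomy z (a i.succ) with h | h | h
  · exact h
  · exact absurd h.symm (hz i.succ)
  · have hmem : i.succ ∈ T := by simp [hT, h]
    have hle := T.le_max' _ hmem
    rw [← hj, ← hi] at hle
    exact absurd (lt_of_lt_of_le (Fin.castSucc_lt_succ (i := i)) hle) (lt_irrefl _)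

theorem Ioo_subset_of_avoid {u v p q z : ℝ} (hz : z ∈ Set.Ioo u v) (hzpq : z ∈ Set.Ioo p q)
    (hp : p ∉ Set.Ioo u v) (hq : q ∉ Set.Ioo u v) : Set.Ioo u v ⊆ Set.Ioo p q := by
  intro w hw
  constructor
  · by_contra hc
    push_neg at hc
    exact hp ⟨lt_of_lt_of_le hw.1 hc, lt_trans hzpq.1 hz.2⟩
  · by_contra hc
    push_neg at hc
    exact hq ⟨lt_trans hz.1 hzpq.2, lt_of_le_of_lt hc hw.2⟩

theorem isFIET_char {f : Equiv.Perm ℝ} : IsFIET f ↔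
    (∀ x : ℝ, x ∉ Set.Ico (0 : ℝ) 1 → f x = x) ∧
    ∃ S : Finset ℝ, (↑S : Set ℝ) ⊆ Set.Icc 0 1 ∧ (0 : ℝ) ∈ S ∧ (1 : ℝ) ∈ S ∧
      ∀ u v : ℝ, u < v → (∀ s ∈ S, s ∉ Set.Ioo u v) → GoodOn f u v := by
  classical
  constructor
  · rintro ⟨hfix, m, a, ha0, halast, hmono, hpieces⟩
    refine ⟨hfix, Finset.univ.image a, ?_, ?_, ?_, ?_⟩
    · intro s hs
      simp only [Finset.coe_image, Finset.coe_univ, Set.image_univ, Set.mem_range] at hs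
      obtain ⟨i, rfl⟩ := hs
      exact ⟨ha0 ▸ hmono.monotone (Fin.zero_le i), halast ▸ hmono.monotone (Fin.le_last i)⟩
    · exact Finset.mem_image.mpr ⟨0, Finset.mem_univ _, ha0⟩
    · exact Finset.mem_image.mpr ⟨Fin.last (m + 1), Finset.mem_univ _, halast⟩
    · intro u v huv havoid
      have havoid' : ∀ i, a i ∉ Set.Ioo u v := fun i =>
        havoid (a i) (Finset.mem_image.mpr ⟨i, Finset.mem_univ _, rfl⟩)
      set z := (u + v) / 2 with hzdef
      have hz : z ∈ Set.Ioo u v := ⟨by linarith, by linarith⟩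
      have h0av : (0 : ℝ) ∉ Set.Ioo u v := ha0 ▸ havoid' 0
      have h1av : (1 : ℝ) ∉ Set.Ioo u v := halast ▸ havoid' (Fin.last (m + 1))
      rcases lt_trichotomy z 0 with hz0 | hz0 | hz0
      · left
        refine ⟨0, fun x hx => ?_⟩
        rw [add_zero]
        apply hfix
        intro hmem
        exact h0av ⟨lt_trans hz.1 hz0, lt_of_le_of_lt hmem.1 hx.2⟩
      · exact absurd (hz0 ▸ hz) h0av
      · rcases lt_trichotomy z 1 with hz1 | hz1 | hz1
        · have hi := exists_piece hmono (ha0 ▸ hz0) (halast ▸ hz1)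
            (fun i h => havoid' i (h ▸ hz))
          obtain ⟨i, hil, hir⟩ := hi
          have hsub := Ioo_subset_of_avoid hz ⟨hil, hir⟩
            (havoid' i.castSucc) (havoid' i.succ)
          have : GoodOn f (a i.castSucc) (a i.succ) := hpieces i
          exact this.mono hsub
        · exact absurd (hz1 ▸ hz) h1av
        · left
          refine ⟨0, fun x hx => ?_⟩
          rw [add_zero]
          apply hfix
          intro hmem
          exact h1av ⟨lt_trans hx.1 hmem.2, lt_trans hz1 hz.2⟩
  · rintro ⟨hfix, S, hsub, h0S, h1S, hgood⟩
    refine ⟨hfix, ?_⟩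
    have hcard : 2 ≤ S.card := Finset.one_lt_card.mpr ⟨0, h0S, 1, h1S, by norm_num⟩
    obtain ⟨m, hm⟩ : ∃ m, S.card = m + 2 := ⟨S.card - 2, by omega⟩
    set e := S.orderIsoOfFin hm with he
    have hmemS : ∀ i, (e i : ℝ) ∈ Set.Icc (0 : ℝ) 1 := fun i => hsub (e i).2
    have hmono : StrictMono (fun i => (e i : ℝ)) := fun i j h => Subtype.coe_lt_coe.mpr
      (e.strictMono h)
    refine ⟨m, fun i => (e i : ℝ), ?_, ?_, hmono, ?_⟩
    · obtain ⟨j, hj⟩ : ∃ j, (e j : ℝ) = 0 := ⟨e.symm ⟨0, h0S⟩, by simp⟩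
      have h1 : (e 0 : ℝ) ≤ (e j : ℝ) := Subtype.coe_le_coe.mpr (e.monotone (Fin.zero_le j))
      exact le_antisymm (hj ▸ h1) (hmemS 0).1
    · obtain ⟨j, hj⟩ : ∃ j, (e j : ℝ) = 1 := ⟨e.symm ⟨1, h1S⟩, by simp⟩
      have h1 : (e j : ℝ) ≤ (e (Fin.last (m + 1)) : ℝ) :=
        Subtype.coe_le_coe.mpr (e.monotone (Fin.le_last j))
      exact le_antisymm (hmemS _).2 (hj ▸ h1)
    · intro i
      have huv : (e i.castSucc : ℝ) < (e i.succ : ℝ) := hmono (Fin.castSucc_lt_succ (i := i))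
      refine hgood _ _ huv ?_
      intro s hs hsIoo
      obtain ⟨j, hj⟩ : ∃ j, (e j : ℝ) = s := ⟨e.symm ⟨s, hs⟩, by simp⟩
      rw [← hj] at hsIoo
      have h1 : i.castSucc < j := (hmono.lt_iff_lt).mp hsIoo.1
      have h2 : j < i.succ := (hmono.lt_iff_lt).mp hsIoo.2
      exact absurd (lt_of_le_of_lt (Fin.castSucc_lt_iff_succ_le.mp h1) h2) (lt_irrefl _)

end DV

namespace DV
open Set

theorem fix_maps {f : Equiv.Perm ℝ} (hfix : ∀ x ∉ Set.Ico (0:ℝ) 1, f x = x) {x : ℝ}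
    (hx : x ∈ Set.Ico (0:ℝ) 1) : f x ∈ Set.Ico (0:ℝ) 1 := by
  by_contra h
  have h2 : f x = x := f.injective (hfix (f x) h)
  rw [h2] at h
  exact h hx

theorem isFIET_one : IsFIET 1 := by
  rw [isFIET_char]
  refine ⟨fun x _ => rfl, {0, 1}, ?_, by simp, by simp, ?_⟩
  · intro s hs
    simp only [Finset.coe_insert, Finset.coe_singleton, Set.mem_insert_iff,
      Set.mem_singleton_iff] at hs
    rcases hs with rfl | rfl <;> constructor <;> norm_num
  · intro u v _ _
    exact Or.inl ⟨0, fun x _ => by simp⟩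

theorem _root_.IsFIET.mul {f g : Equiv.Perm ℝ} (hf : IsFIET f) (hg : IsFIET g) : IsFIET (f * g) := by
  classical
  obtain ⟨hffix, Sf, hSf, h0f, h1f, hgoodf⟩ := isFIET_char.mp hf
  obtain ⟨hgfix, Sg, hSg, h0g, h1g, hgoodg⟩ := isFIET_char.mp hg
  rw [isFIET_char]
  have hpre : (⇑g ⁻¹' ↑Sf).Finite := Sf.finite_toSet.preimage g.injective.injOn
  refine ⟨fun x hx => by rw [Equiv.Perm.mul_apply, hgfix x hx, hffix x hx],
    Sg ∪ (hpre.toFinset.filter (· ∈ Set.Icc (0:ℝ) 1)) ∪ {0, 1}, ?_, ?_, ?_, ?_⟩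
  · intro s hs
    simp only [Finset.coe_union, Set.mem_union, Finset.mem_coe, Finset.mem_filter,
      Finset.mem_insert, Finset.mem_singleton] at hs
    rcases hs with (h | h) | (h | h)
    · exact hSg (by exact_mod_cast h)
    · exact h.2
    · subst h; constructor <;> norm_num
    · subst h; constructor <;> norm_num
  · exact Finset.mem_union_right _ (by simp)
  · exact Finset.mem_union_right _ (by simp)
  · intro u v huv havoid
    have havg : ∀ s ∈ Sg, s ∉ Set.Ioo u v := fun s hs =>
      havoid s (Finset.mem_union_left _ (Finset.mem_union_left _ hs))
    have hpre' : ∀ z ∈ Set.Ioo u v, z ∈ Set.Icc (0:ℝ) 1 → g z ∉ (Sf : Set ℝ) := by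
      intro z hz hzIcc hmem
      refine havoid z ?_ hz
      exact Finset.mem_union_left _ (Finset.mem_union_right _
        (Finset.mem_filter.mpr ⟨hpre.mem_toFinset.mpr hmem, hzIcc⟩))
    have key : ∀ z ∈ Set.Ioo u v, g z ∈ (Sf : Set ℝ) → False := by
      intro z hz hmem
      by_cases hzIcc : z ∈ Set.Icc (0:ℝ) 1
      · exact hpre' z hz hzIcc hmem
      · have hzIco : z ∉ Set.Ico (0:ℝ) 1 := fun h => hzIcc ⟨h.1, h.2.le⟩
        have := hgfix z hzIco
        rw [this] at hmem
        exact hzIcc (hSf hmem)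
    rcases hgoodg u v huv havg with ⟨cg, hcg⟩ | ⟨cg, hcg⟩
    · have hgoodf' : GoodOn f (u + cg) (v + cg) := by
        refine hgoodf _ _ (by linarith) ?_
        intro s hs hsIoo
        have hz : s - cg ∈ Set.Ioo u v := ⟨by linarith [hsIoo.1], by linarith [hsIoo.2]⟩
        refine key _ hz ?_
        rw [hcg _ hz]
        simpa using hs
      rcases hgoodf' with ⟨cf, hcf⟩ | ⟨cf, hcf⟩
      · exact Or.inl ⟨cg + cf, fun x hx => by
          rw [Equiv.Perm.mul_apply, hcg x hx,
            hcf _ ⟨by linarith [hx.1], by linarith [hx.2]⟩]; ring⟩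
      · exact Or.inr ⟨cf - cg, fun x hx => by
          rw [Equiv.Perm.mul_apply, hcg x hx,
            hcf _ ⟨by linarith [hx.1], by linarith [hx.2]⟩]; ring⟩
    · have hgoodf' : GoodOn f (cg - v) (cg - u) := by
        refine hgoodf _ _ (by linarith) ?_
        intro s hs hsIoo
        have hz : cg - s ∈ Set.Ioo u v := ⟨by linarith [hsIoo.2], by linarith [hsIoo.1]⟩
        refine key _ hz ?_
        rw [hcg _ hz]
        simpa using hs
      rcases hgoodf' with ⟨cf, hcf⟩ | ⟨cf, hcf⟩
      · exact Or.inr ⟨cg + cf, fun x hx => by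
          rw [Equiv.Perm.mul_apply, hcg x hx,
            hcf _ ⟨by linarith [hx.2], by linarith [hx.1]⟩]; ring⟩
      · exact Or.inl ⟨cf - cg, fun x hx => by
          rw [Equiv.Perm.mul_apply, hcg x hx,
            hcf _ ⟨by linarith [hx.2], by linarith [hx.1]⟩]; ring⟩

end DV

namespace DV
open Set

theorem trans_piece {f : Equiv.Perm ℝ} {p q c : ℝ} (h : ∀ x ∈ Set.Ioo p q, f x = x + c) :
    (∀ x ∈ Set.Ioo p q, f x ∈ Set.Ioo (p + c) (q + c)) ∧
    (∀ y ∈ Set.Ioo (p + c) (q + c), f⁻¹ y = y - c ∧ y - c ∈ Set.Ioo p q) := by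
  constructor
  · intro x hx
    rw [h x hx]
    exact ⟨by linarith [hx.1], by linarith [hx.2]⟩
  · intro y hy
    have hmem : y - c ∈ Set.Ioo p q := ⟨by linarith [hy.1], by linarith [hy.2]⟩
    refine ⟨f.injective ?_, hmem⟩
    rw [Equiv.Perm.apply_inv_self, h _ hmem]
    ring

theorem flip_piece {f : Equiv.Perm ℝ} {p q c : ℝ} (h : ∀ x ∈ Set.Ioo p q, f x = c - x) :
    (∀ x ∈ Set.Ioo p q, f x ∈ Set.Ioo (c - q) (c - p)) ∧
    (∀ y ∈ Set.Ioo (c - q) (c - p), f⁻¹ y = c - y ∧ c - y ∈ Set.Ioo p q) := by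
  constructor
  · intro x hx
    rw [h x hx]
    exact ⟨by linarith [hx.2], by linarith [hx.1]⟩
  · intro y hy
    have hmem : c - y ∈ Set.Ioo p q := ⟨by linarith [hy.2], by linarith [hy.1]⟩
    refine ⟨f.injective ?_, hmem⟩
    rw [Equiv.Perm.apply_inv_self, h _ hmem]
    ring

theorem Ioo_subset_Icc_ends {P Q : ℝ} (h : P < Q) (hs : Set.Ioo P Q ⊆ Set.Icc 0 1) :
    P ∈ Set.Icc (0:ℝ) 1 ∧ Q ∈ Set.Icc (0:ℝ) 1 := by
  have h1 : 0 ≤ P := by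
    by_contra hc
    push_neg at hc
    have hPm : P < min Q 0 := lt_min h hc
    have hw : (P + min Q 0) / 2 ∈ Set.Ioo P Q :=
      ⟨by linarith, by linarith [min_le_left Q 0]⟩
    have := (hs hw).1
    linarith [min_le_right Q 0]
  have h2 : Q ≤ 1 := by
    by_contra hc
    push_neg at hc
    have hQm : max P 1 < Q := max_lt h hc
    have hw : (max P 1 + Q) / 2 ∈ Set.Ioo P Q :=
      ⟨by linarith [le_max_left P 1], by linarith⟩
    have := (hs hw).2
    linarith [le_max_right P 1]
  exact ⟨⟨h1, le_trans h.le h2⟩, ⟨le_trans h1 h.le, h2⟩⟩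

theorem location {m : ℕ} {a : Fin (m + 2) → ℝ} (hmono : StrictMono a) (ha0 : a 0 = 0)
    (halast : a (Fin.last (m + 1)) = 1) {w : ℝ} (hw : w ∈ Set.Ico (0:ℝ) 1) :
    (∃ i, a i = w) ∨ ∃ i : Fin (m + 1), w ∈ Set.Ioo (a i.castSucc) (a i.succ) := by
  by_cases hr : ∃ i, a i = w
  · exact Or.inl hr
  · push_neg at hr
    right
    have h0 : a 0 < w := by
      have hne := hr 0
      rw [ha0] at hne ⊢
      exact lt_of_le_of_ne hw.1 hne
    obtain ⟨i, h1, h2⟩ := exists_piece hmono h0 (halast ▸ hw.2) hr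
    exact ⟨i, h1, h2⟩

theorem _root_.IsFIET.inv {f : Equiv.Perm ℝ} (hf : IsFIET f) : IsFIET f⁻¹ := by
  classical
  obtain ⟨hfix, m, a, ha0, halast, hmono, hpieces⟩ := hf
  have hinvfix : ∀ x ∉ Set.Ico (0:ℝ) 1, f⁻¹ x = x := fun x hx =>
    f.injective (by rw [Equiv.Perm.apply_inv_self, hfix x hx])
  have haLB : ∀ i, 0 ≤ a i := fun i => ha0 ▸ hmono.monotone (Fin.zero_le i)
  have haUB : ∀ i, a i ≤ 1 := fun i => halast ▸ hmono.monotone (Fin.le_last i)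
  have hpsub : ∀ i : Fin (m+1), Set.Ioo (a i.castSucc) (a i.succ) ⊆ Set.Ico 0 1 :=
    fun i x hx => ⟨le_trans (haLB _) hx.1.le, lt_of_lt_of_le hx.2 (haUB _)⟩
  have hfa_mem : ∀ i, f (a i) ∈ Set.Icc (0:ℝ) 1 := by
    intro i
    rcases lt_or_eq_of_le (haUB i) with h | h
    · have := fix_maps hfix (x := a i) ⟨haLB i, h⟩
      exact ⟨this.1, this.2.le⟩
    · rw [h, hfix 1 (by norm_num)]
      norm_num
  have hch : ∀ i : Fin (m+1), ∃ c : ℝ,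
      (∀ x ∈ Set.Ioo (a i.castSucc) (a i.succ), f x = x + c) ∨
      (∀ x ∈ Set.Ioo (a i.castSucc) (a i.succ), f x = c - x) := by
    intro i
    rcases hpieces i with ⟨c, hc⟩ | ⟨c, hc⟩
    exacts [⟨c, Or.inl hc⟩, ⟨c, Or.inr hc⟩]
  choose cc hcc using hch
  have hplt : ∀ i : Fin (m+1), a i.castSucc < a i.succ := fun i => hmono (Fin.castSucc_lt_succ (i := i))
  -- image intervals and their properties, per direction
  rw [isFIET_char]
  set S : Finset ℝ := (((Finset.univ.image fun i : Fin (m+2) => f (a i)) ∪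
      (Finset.univ.image fun i : Fin (m+1) => a i.castSucc + cc i) ∪
      (Finset.univ.image fun i : Fin (m+1) => a i.succ + cc i) ∪
      (Finset.univ.image fun i : Fin (m+1) => cc i - a i.castSucc) ∪
      (Finset.univ.image fun i : Fin (m+1) => cc i - a i.succ)).filter
        (· ∈ Set.Icc (0:ℝ) 1)) ∪ {0, 1} with hS
  refine ⟨hinvfix, S, ?_, ?_, ?_, ?_⟩
  · intro s hs
    rw [hS] at hs
    simp only [Finset.coe_union, Set.mem_union, Finset.mem_coe, Finset.mem_filter,
      Finset.mem_insert, Finset.mem_singleton] at hs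
    rcases hs with h | (h | h)
    · exact h.2
    · subst h; constructor <;> norm_num
    · subst h; constructor <;> norm_num
  · exact Finset.mem_union_right _ (by simp)
  · exact Finset.mem_union_right _ (by simp)
  · intro u v huv havoid
    have hmemS : ∀ r : ℝ, r ∈ Set.Icc (0:ℝ) 1 →
        (r ∈ (Finset.univ.image fun i : Fin (m+2) => f (a i)) ∪
          (Finset.univ.image fun i : Fin (m+1) => a i.castSucc + cc i) ∪
          (Finset.univ.image fun i : Fin (m+1) => a i.succ + cc i) ∪
          (Finset.univ.image fun i : Fin (m+1) => cc i - a i.castSucc) ∪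
          (Finset.univ.image fun i : Fin (m+1) => cc i - a i.succ)) → r ∉ Set.Ioo u v := by
      intro r hIcc hmem
      exact havoid r (Finset.mem_union_left _ (Finset.mem_filter.mpr ⟨hmem, hIcc⟩))
    have hav_fa : ∀ i : Fin (m+2), f (a i) ∉ Set.Ioo u v := by
      intro i
      refine hmemS _ (hfa_mem i) ?_
      refine Finset.mem_union_left _ (Finset.mem_union_left _ (Finset.mem_union_left _
        (Finset.mem_union_left _ (Finset.mem_image.mpr ⟨i, Finset.mem_univ _, rfl⟩))))
    -- per-piece data
    -- case analysis on where f⁻¹ ((u+v)/2) lies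
    set z := (u + v) / 2 with hzdef
    have hz : z ∈ Set.Ioo u v := ⟨by linarith, by linarith⟩
    have hmain : ∀ i : Fin (m+1), ∀ y0 ∈ Set.Ioo u v,
        f⁻¹ y0 ∈ Set.Ioo (a i.castSucc) (a i.succ) →
        (∀ y ∈ Set.Ioo u v, f⁻¹ y ∈ Set.Ioo (a i.castSucc) (a i.succ)) ∧ GoodOn f⁻¹ u v := by
      intro i y0 hy0 hxy0
      rcases hcc i with hdir | hdir
      · obtain ⟨himg, hinv⟩ := trans_piece hdir
        have hIsub : Set.Ioo (a i.castSucc + cc i) (a i.succ + cc i) ⊆ Set.Icc (0:ℝ) 1 := by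
          intro y hy
          have hmem := (hinv y hy).2
          have himg2 := fix_maps hfix (hpsub i hmem)
          have heq : f (y - cc i) = y := by rw [hdir _ hmem]; ring
          rw [heq] at himg2
          exact ⟨himg2.1, himg2.2.le⟩
        have hPQ := Ioo_subset_Icc_ends (by linarith [hplt i]) hIsub
        have hPav : a i.castSucc + cc i ∉ Set.Ioo u v := by
          refine hmemS _ hPQ.1 ?_
          exact Finset.mem_union_left _ (Finset.mem_union_left _ (Finset.mem_union_left _
            (Finset.mem_union_right _ (Finset.mem_image.mpr ⟨i, Finset.mem_univ _, rfl⟩))))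
        have hQav : a i.succ + cc i ∉ Set.Ioo u v := by
          refine hmemS _ hPQ.2 ?_
          exact Finset.mem_union_left _ (Finset.mem_union_left _ (Finset.mem_union_right _
            (Finset.mem_image.mpr ⟨i, Finset.mem_univ _, rfl⟩)))
        have hy0I : y0 ∈ Set.Ioo (a i.castSucc + cc i) (a i.succ + cc i) := by
          have := himg _ hxy0
          rwa [Equiv.Perm.apply_inv_self] at this
        have hsub := Ioo_subset_of_avoid hy0 hy0I hPav hQav
        constructor
        · intro y hy
          have h2 := hinv y (hsub hy)
          rw [h2.1]
          exact h2.2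
        · exact Or.inl ⟨-(cc i), fun y hy => by rw [(hinv y (hsub hy)).1]; ring⟩
      · obtain ⟨himg, hinv⟩ := flip_piece hdir
        have hIsub : Set.Ioo (cc i - a i.succ) (cc i - a i.castSucc) ⊆ Set.Icc (0:ℝ) 1 := by
          intro y hy
          have hmem := (hinv y hy).2
          have himg2 := fix_maps hfix (hpsub i hmem)
          have heq : f (cc i - y) = y := by rw [hdir _ hmem]; ring
          rw [heq] at himg2
          exact ⟨himg2.1, himg2.2.le⟩
        have hPQ := Ioo_subset_Icc_ends (by linarith [hplt i]) hIsub
        have hPav : cc i - a i.succ ∉ Set.Ioo u v := by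
          refine hmemS _ hPQ.1 ?_
          exact Finset.mem_union_right _ (Finset.mem_image.mpr ⟨i, Finset.mem_univ _, rfl⟩)
        have hQav : cc i - a i.castSucc ∉ Set.Ioo u v := by
          refine hmemS _ hPQ.2 ?_
          exact Finset.mem_union_left _ (Finset.mem_union_right _
            (Finset.mem_image.mpr ⟨i, Finset.mem_univ _, rfl⟩))
        have hy0I : y0 ∈ Set.Ioo (cc i - a i.succ) (cc i - a i.castSucc) := by
          have := himg _ hxy0
          rwa [Equiv.Perm.apply_inv_self] at this
        have hsub := Ioo_subset_of_avoid hy0 hy0I hPav hQav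
        constructor
        · intro y hy
          have h2 := hinv y (hsub hy)
          rw [h2.1]
          exact h2.2
        · exact Or.inr ⟨cc i, fun y hy => (hinv y (hsub hy)).1⟩
    by_cases hcase : ∃ i : Fin (m+1), f⁻¹ z ∈ Set.Ioo (a i.castSucc) (a i.succ)
    · obtain ⟨i, hxz⟩ := hcase
      exact (hmain i z hz hxz).2
    · left
      refine ⟨0, fun y hy => ?_⟩
      rw [add_zero]
      by_cases hw : f⁻¹ y ∈ Set.Ico (0:ℝ) 1
      · rcases location hmono ha0 halast hw with ⟨i, hi⟩ | ⟨i, hi⟩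
        · exfalso
          apply hav_fa i
          rw [hi, Equiv.Perm.apply_inv_self]
          exact hy
        · exact absurd ⟨i, (hmain i y hy hi).1 z hz⟩ hcase
      · have h1 : f (f⁻¹ y) = f⁻¹ y := hfix _ hw
        rw [Equiv.Perm.apply_inv_self] at h1
        exact h1.symm

end DV

namespace DV
open Set

theorem supp_comm {A : Set ℝ} {a b : Equiv.Perm ℝ} (ha : Supp A a) (hb : Supp A b) :
    Supp A ⁅a, b⁆ := by
  rw [commutatorElement_def]
  exact ((ha.mul hb).mul ha.inv).mul hb.inv

theorem supp_Pi' {A : Set ℝ} {n : ℕ} {f : ℕ → Equiv.Perm ℝ} (h : ∀ k < n, Supp A (f k)) :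
    Supp A (Pi' n f) := by
  induction n with
  | zero => exact Supp.one A
  | succ n ih =>
    rw [Pi'_succ]
    exact (ih (fun k hk => h k (by omega))).mul (h n (by omega))

theorem isFIET_rot' (β : ℝ) : IsFIET (rot' β) := by
  by_cases h : 0 < β ∧ β < 1
  · rw [rot'_eq β h.1 h.2]
    exact isFIET_rot β h.1 h.2
  · rw [rot'_of_not h]
    exact isFIET_one

theorem isFIET_comm {a b : Equiv.Perm ℝ} (ha : IsFIET a) (hb : IsFIET b) : IsFIET ⁅a, b⁆ := by
  rw [commutatorElement_def]
  exact ((ha.mul hb).mul ha.inv).mul hb.inv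

theorem isFIET_Pi' {n : ℕ} {f : ℕ → Equiv.Perm ℝ} (h : ∀ k < n, IsFIET (f k)) :
    IsFIET (Pi' n f) := by
  induction n with
  | zero => exact isFIET_one
  | succ n ih =>
    rw [Pi'_succ]
    exact (ih (fun k hk => h k (by omega))).mul (h n (by omega))

theorem conj_commutator {G : Type*} [Group G] (g a b : G) :
    g * ⁅a, b⁆ * g⁻¹ = ⁅g * a * g⁻¹, g * b * g⁻¹⁆ := by
  simp only [commutatorElement_def]
  group

theorem core (n mm : ℕ) (lam : ℝ) (hlam0 : 0 < lam) (hn : 1 ≤ n)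
    (hlam1 : ((n : ℝ) + 1) * lam = 1)
    (A B : ℕ → Equiv.Perm ℝ)
    (hAf : ∀ i, IsFIET (A i)) (hAs : ∀ i, Supp (Set.Ico (1 - lam) 1) (A i))
    (hBf : ∀ i, IsFIET (B i)) (hBs : ∀ i, Supp (Set.Ico (1 - lam) 1) (B i)) :
    ∃ l : List (Equiv.Perm ℝ), l.length = mm + 1 ∧ (∀ x ∈ l, x ∈ FIETCommutators) ∧
      l.prod = Pi' ((n + 1) * mm) (fun i => ⁅A i, B i⁆) := by
  have hn' : (1 : ℝ) ≤ (n : ℝ) := by exact_mod_cast hn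
  have hlam_lt1 : lam < 1 := by nlinarith
  set J : Set ℝ := Set.Ico (1 - lam) 1 with hJ
  set r : Equiv.Perm ℝ := rot lam hlam0 hlam_lt1 with hr
  set ρ : ℕ → Equiv.Perm ℝ := fun k => rot' ((k : ℝ) * lam) with hρ
  have hρ0 : ρ 0 = 1 := by
    simp only [hρ, Nat.cast_zero, zero_mul]
    exact rot'_zero
  have hρmul : ∀ k, k < n → r * ρ k = ρ (k + 1) := by
    intro k hk
    have h2 : (0 : ℝ) ≤ (k : ℝ) * lam := by positivity
    have hkn : (k : ℝ) + 1 ≤ (n : ℝ) := by exact_mod_cast hk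
    have h3 : lam + (k : ℝ) * lam < 1 := by nlinarith
    calc r * ρ k = rot' lam * rot' ((k : ℝ) * lam) := by
          rw [hρ, hr, rot'_eq lam hlam0 hlam_lt1]
      _ = rot' (lam + (k : ℝ) * lam) := rot'_add hlam0 h2 h3
      _ = ρ (k + 1) := by
          simp only [hρ]
          congr 1
          push_cast
          ring
  have hρfiet : ∀ k, IsFIET (ρ k) := fun k => isFIET_rot' _
  set dk : ℕ → ℝ := fun k => if k = 0 then 1 - lam else ((k : ℝ) - 1) * lam with hdk
  have hmapsD : ∀ k ≤ n, ∀ y ∈ J, (ρ k) y ∈ Set.Ico (dk k) (dk k + lam) := by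
    intro k hk y hy
    rcases Nat.eq_zero_or_pos k with rfl | hkpos
    · rw [hρ0]
      simp only [hdk, if_pos rfl, Equiv.Perm.one_apply]
      exact ⟨hy.1, by linarith [hy.2]⟩
    · have hk1 : (1 : ℝ) ≤ (k : ℝ) := by exact_mod_cast hkpos
      have hkn : (k : ℝ) ≤ (n : ℝ) := by exact_mod_cast hk
      have hklam0 : 0 < (k : ℝ) * lam := by positivity
      have hklam1 : (k : ℝ) * lam < 1 := by nlinarith
      have hρk : ρ k = rot ((k : ℝ) * lam) hklam0 hklam1 := by
        rw [hρ]
        exact rot'_eq _ _ _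
      rw [hρk, rot_apply_hi _ _ _ (by nlinarith [hy.1]) hy.2]
      simp only [hdk, if_neg hkpos.ne']
      constructor
      · nlinarith [hy.1]
      · nlinarith [hy.2]
  have hDdisj : ∀ j ≤ n, ∀ k ≤ n, j ≠ k →
      Disjoint (Set.Ico (dk j) (dk j + lam)) (Set.Ico (dk k) (dk k + lam)) := by
    intro j hj k hk hjk
    rw [Set.Ico_disjoint_Ico]
    suffices h : dk j + lam ≤ dk k ∨ dk k + lam ≤ dk j by
      rcases h with h | h
      · exact le_trans (min_le_left _ _) (le_trans h (le_max_right _ _))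
      · exact le_trans (min_le_right _ _) (le_trans h (le_max_left _ _))
    have hval : ∀ p, 0 < p → p ≤ n → dk p + lam = (p : ℝ) * lam := by
      intro p hp _
      simp only [hdk, if_neg hp.ne']
      ring
    have hval0 : dk 0 = 1 - lam := by simp [hdk]
    rcases Nat.eq_zero_or_pos j with rfl | hjpos
    · right
      rcases Nat.eq_zero_or_pos k with rfl | hkpos
      · exact absurd rfl hjk
      · rw [hval k hkpos hk, hval0]
        have : (k : ℝ) ≤ (n : ℝ) := by exact_mod_cast hk
        nlinarith
    · rcases Nat.eq_zero_or_pos k with rfl | hkpos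
      · left
        rw [hval j hjpos hj, hval0]
        have : (j : ℝ) ≤ (n : ℝ) := by exact_mod_cast hj
        nlinarith
      · rcases lt_or_gt_of_ne hjk with h | h
        · left
          rw [hval j hjpos hj]
          simp only [hdk, if_neg hkpos.ne']
          have : (j : ℝ) + 1 ≤ (k : ℝ) := by exact_mod_cast h
          nlinarith
        · right
          rw [hval k hkpos hk]
          simp only [hdk, if_neg hjpos.ne']
          have : (k : ℝ) + 1 ≤ (j : ℝ) := by exact_mod_cast h
          nlinarith
  have hcomm : ∀ j ≤ n, ∀ k ≤ n, j ≠ k → ∀ h h' : Equiv.Perm ℝ, Supp J h → Supp J h' →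
      Commute (ρ j * h * (ρ j)⁻¹) (ρ k * h' * (ρ k)⁻¹) := by
    intro j hj k hk hjk h h' hh hh'
    exact Supp.commute (hh.conj (hmapsD j hj)) (hh'.conj (hmapsD k hk)) (hDdisj j hj k hk hjk)
  -- the elements
  set x : ℕ → Equiv.Perm ℝ :=
    fun k => Pi' mm (fun j => ⁅A (k * mm + j), B (k * mm + j)⁆) with hx
  have hxsupp : ∀ k, Supp J (x k) :=
    fun k => supp_Pi' (fun j _ => supp_comm (hAs _) (hBs _))
  have hxfiet : ∀ k, IsFIET (x k) :=
    fun k => isFIET_Pi' (fun j _ => isFIET_comm (hAf _) (hBf _))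
  set cs : ℕ → Equiv.Perm ℝ := fun k => Pi' (n + 1 - k) (fun i => x (k + i)) with hcs
  have hcs_succ : ∀ k ≤ n, cs k = x k * cs (k + 1) := by
    intro k hk
    have h1 : n + 1 - k = (n - k) + 1 := by omega
    have h2 : n + 1 - (k + 1) = n - k := by omega
    simp only [hcs, h1, h2, Pi'_succ']
    congr 1
    all_goals first
      | simp
      | exact Pi'_congr (fun i _ => by congr 1; omega)
  have hcs_top : cs (n + 1) = 1 := by
    rw [hcs]
    simp only [Nat.sub_self]
    exact Pi'_zero _
  have hcssupp : ∀ k, Supp J (cs k) :=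
    fun k => supp_Pi' (fun i _ => hxsupp _)
  have hcsfiet : ∀ k, IsFIET (cs k) :=
    fun k => isFIET_Pi' (fun i _ => hxfiet _)
  set V : ℕ → Equiv.Perm ℝ := fun k => ρ k * cs k * (ρ k)⁻¹ with hV
  set U : ℕ → Equiv.Perm ℝ := fun k => ρ k * cs (k + 1) * (ρ k)⁻¹ with hU
  set P : Equiv.Perm ℝ := Pi' (n + 1) V with hP
  set Q : Equiv.Perm ℝ := Pi' (n + 1) U with hQ
  have hstep : ∀ k ≤ n, r * U k * r⁻¹ = V (k + 1) := by
    intro k hk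
    rcases eq_or_lt_of_le hk with rfl | hk'
    · simp [hU, hV, hcs_top]
    · have hmul := hρmul k hk'
      show r * (ρ k * cs (k + 1) * (ρ k)⁻¹) * r⁻¹ = ρ (k + 1) * cs (k + 1) * (ρ (k + 1))⁻¹
      rw [← hmul]
      group
  have hPQr : P = cs 0 * (r * Q * r⁻¹) := by
    have h1 : r * Q * r⁻¹ = Pi' (n + 1) (fun k => r * U k * r⁻¹) := Pi'_conj _ _ _
    have h2 : Pi' (n + 1) (fun k => r * U k * r⁻¹) = Pi' (n + 1) (fun k => V (k + 1)) :=
      Pi'_congr (fun k hk => hstep k (by omega))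
    have h4 : V (n + 1) = 1 := by simp [hV, hcs_top]
    have h6 : V 0 = cs 0 := by simp [hV, hρ0]
    rw [hP, Pi'_succ', h6, h1, h2, Pi'_succ, h4, mul_one]
  have hVU_comm : ∀ (w w' : ℕ → Equiv.Perm ℝ),
      (∀ k, Supp J (w k)) → (∀ k, Supp J (w' k)) →
      ∀ j < n + 1, ∀ k < n + 1, j ≠ k →
        Commute (ρ j * w j * (ρ j)⁻¹) (ρ k * w' k * (ρ k)⁻¹) := by
    intro w w' hw hw' j hj k hk hjk
    exact hcomm j (by omega) k (by omega) hjk _ _ (hw j) (hw' k)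
  have hPQ : P * Q⁻¹ = Pi' (n + 1) (fun k => ρ k * x k * (ρ k)⁻¹) := by
    rw [hQ, Pi'_inv (hVU_comm _ _ (fun k => hcssupp (k + 1)) (fun k => hcssupp (k + 1))),
      hP]
    have : ∀ k < n + 1, (U k)⁻¹ = ρ k * (cs (k + 1))⁻¹ * (ρ k)⁻¹ := by
      intro k _
      rw [hU]
      simp only
      group
    rw [Pi'_congr this, Pi'_mul (hVU_comm _ _ (fun k => hcssupp k)
      (fun k => (hcssupp (k + 1)).inv))]
    refine Pi'_congr (fun k hk => ?_)
    rw [hcs_succ k (by omega)]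
    group
  have hkey : cs 0 = (P * Q⁻¹) * ⁅Q, r⁆ := by
    rw [commutatorElement_def, hPQr]
    group
  set cA : ℕ → ℕ → Equiv.Perm ℝ := fun k j => ρ k * A (k * mm + j) * (ρ k)⁻¹ with hcA
  set cB : ℕ → ℕ → Equiv.Perm ℝ := fun k j => ρ k * B (k * mm + j) * (ρ k)⁻¹ with hcB
  have hsplit : ∀ k < n + 1, ρ k * x k * (ρ k)⁻¹ =
      Pi' mm (fun j => ⁅cA k j, cB k j⁆) := by
    intro k _
    rw [hx]
    simp only
    rw [Pi'_conj]
    exact Pi'_congr (fun j _ => conj_commutator _ _ _)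
  have hcomm_e : ∀ k < n + 1, ∀ k' < n + 1, k ≠ k' → ∀ j < mm, ∀ j' < mm,
      Commute ⁅cA k j, cB k j⁆ ⁅cA k' j', cB k' j'⁆ := by
    intro k hk k' hk' hkk' j _ j' _
    have h1 : ⁅cA k j, cB k j⁆ = ρ k * ⁅A (k * mm + j), B (k * mm + j)⁆ * (ρ k)⁻¹ :=
      (conj_commutator _ _ _).symm
    have h2 : ⁅cA k' j', cB k' j'⁆ =
        ρ k' * ⁅A (k' * mm + j'), B (k' * mm + j')⁆ * (ρ k')⁻¹ :=
      (conj_commutator _ _ _).symm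
    rw [h1, h2]
    exact hcomm k (by omega) k' (by omega) hkk' _ _ (supp_comm (hAs _) (hBs _))
      (supp_comm (hAs _) (hBs _))
  have hswap : Pi' (n + 1) (fun k => Pi' mm (fun j => ⁅cA k j, cB k j⁆)) =
      Pi' mm (fun j => Pi' (n + 1) (fun k => ⁅cA k j, cB k j⁆)) :=
    Pi'_swap hcomm_e
  have hmerge : ∀ j < mm, Pi' (n + 1) (fun k => ⁅cA k j, cB k j⁆) =
      ⁅Pi' (n + 1) (fun k => cA k j), Pi' (n + 1) (fun k => cB k j)⁆ := by
    intro j hj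
    refine (Pi'_commutator ?_).symm
    intro k hk k' hk' hkk'
    refine ⟨?_, ?_, ?_, ?_⟩ <;>
      exact hcomm k (by omega) k' (by omega) hkk' _ _ (by first | exact hAs _ | exact hBs _)
        (by first | exact hAs _ | exact hBs _)
  -- the final list
  refine ⟨((List.range mm).map
      (fun j => ⁅Pi' (n + 1) (fun k => cA k j), Pi' (n + 1) (fun k => cB k j)⁆)) ++ [⁅Q, r⁆],
      ?_, ?_, ?_⟩
  · simp
  · intro y hy
    rcases List.mem_append.mp hy with h | h
    · obtain ⟨j, _, rfl⟩ := List.mem_map.mp h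
      refine ⟨_, _, ?_, ?_, rfl⟩
      · exact isFIET_Pi' (fun k _ => ((hρfiet k).mul (hAf _)).mul (hρfiet k).inv)
      · exact isFIET_Pi' (fun k _ => ((hρfiet k).mul (hBf _)).mul (hρfiet k).inv)
    · rw [List.mem_singleton.mp h]
      refine ⟨Q, r, ?_, ?_, rfl⟩
      · exact isFIET_Pi' (fun k _ => ((hρfiet k).mul (hcsfiet _)).mul (hρfiet k).inv)
      · exact isFIET_rot _ _ _
  · rw [List.prod_append, List.prod_singleton]
    have hfront : ((List.range mm).map
        (fun j => ⁅Pi' (n + 1) (fun k => cA k j), Pi' (n + 1) (fun k => cB k j)⁆)).prod =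
        Pi' mm (fun j => ⁅Pi' (n + 1) (fun k => cA k j), Pi' (n + 1) (fun k => cB k j)⁆) := rfl
    rw [hfront, ← Pi'_congr hmerge, ← hswap, ← Pi'_congr hsplit, ← hPQ, ← hkey]
    have hcs0 : cs 0 = Pi' (n + 1) x := by
      rw [hcs]
      simp only [Nat.sub_zero]
      exact Pi'_congr (fun i _ => by rw [Nat.zero_add])
    rw [hcs0, hx]
    exact Pi'_flatten (n + 1) mm (fun i => ⁅A i, B i⁆)
end DV

namespace DV

theorem nat_ceil_fact (c N : ℕ) (h : 0 < N) : c ≤ N * ((c + N - 1) / N) := by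
  rcases Nat.eq_zero_or_pos c with rfl | hc
  · simp
  · obtain ⟨d, rfl⟩ : ∃ d, c = d + 1 := ⟨c - 1, by omega⟩
    have h1 : d + 1 + N - 1 = d + N := by omega
    rw [h1, Nat.add_div_right _ h, Nat.mul_add, Nat.mul_one]
    have h2 := Nat.div_add_mod d N
    have h3 := Nat.mod_lt d h
    linarith

end DV

/-- Iterated Dennis–Vaserstein estimate in `𝒢̄`: if `g ∈ H̄_{2^t}` is a product of `c`
commutators of elements of `H̄_{2^t}`, then `g` is a product of strictly fewer than
`c / 2^t + 3` commutators of elements of `𝒢̄`. -/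
theorem commutator_length_bar_H_pow_two (t : ℕ) (ht : 1 ≤ t)
    (g : Equiv.Perm ℝ) (hg : IsFIET g)
    (hfix : ∀ x ∈ Set.Ico (0 : ℝ) (1 - 1 / 2 ^ t), g x = x) (c : ℕ)
    (hc : ∃ a b : Fin c → Equiv.Perm ℝ,
      (∀ i, IsFIET (a i) ∧ ∀ x ∈ Set.Ico (0 : ℝ) (1 - 1 / 2 ^ t), a i x = x) ∧
      (∀ i, IsFIET (b i) ∧ ∀ x ∈ Set.Ico (0 : ℝ) (1 - 1 / 2 ^ t), b i x = x) ∧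
      FEq g (List.ofFn fun i => ⁅a i, b i⁆).prod) :
    ∃ l : List (Equiv.Perm ℝ), (l.length : ℝ) < (c : ℝ) / 2 ^ t + 3 ∧
      (∀ x ∈ l, x ∈ FIETCommutators) ∧ FEq g l.prod := by
  classical
  obtain ⟨a, b, ha, hb, hfeq⟩ := hc
  set N : ℕ := 2 ^ t with hN
  have hNpos : 0 < N := Nat.pow_pos (by norm_num)
  have hN2 : 2 ≤ N := by
    calc 2 = 2 ^ 1 := by norm_num
    _ ≤ 2 ^ t := Nat.pow_le_pow_right (by norm_num) ht
  set lam : ℝ := 1 / 2 ^ t with hlam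
  have hlam0 : 0 < lam := by rw [hlam]; positivity
  have hcast : ((N : ℕ) : ℝ) = (2 : ℝ) ^ t := by rw [hN]; push_cast; ring
  have hNlam : ((N : ℕ) : ℝ) * lam = 1 := by
    rw [hcast, hlam]
    field_simp
  set n : ℕ := N - 1 with hn1
  have hNn : N = n + 1 := by omega
  have hn : 1 ≤ n := by omega
  have hlam1 : ((n : ℝ) + 1) * lam = 1 := by
    have he : ((n : ℝ) + 1) = ((N : ℕ) : ℝ) := by rw [hNn]; push_cast; ring
    rw [he]
    exact hNlam
  set m : ℕ := (c + N - 1) / N with hm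
  have hcm : c ≤ N * m := DV.nat_ceil_fact c N hNpos
  set A : ℕ → Equiv.Perm ℝ := fun i => if h : i < c then a ⟨i, h⟩ else 1 with hA
  set B : ℕ → Equiv.Perm ℝ := fun i => if h : i < c then b ⟨i, h⟩ else 1 with hB
  have hsupp : ∀ p : Equiv.Perm ℝ, IsFIET p →
      (∀ x ∈ Set.Ico (0 : ℝ) (1 - 1 / 2 ^ t), p x = x) →
      DV.Supp (Set.Ico (1 - lam) 1) p := by
    intro p hfiet hfx x hx
    by_cases h1 : x ∈ Set.Ico (0 : ℝ) 1
    · refine hfx x ⟨h1.1, ?_⟩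
      rcases lt_or_ge x (1 - lam) with h | h
      · rw [hlam] at h; exact h
      · exact absurd ⟨h, h1.2⟩ hx
    · exact hfiet.1 x h1
  have hAf : ∀ i, IsFIET (A i) := by
    intro i
    rw [hA]
    dsimp only
    split_ifs with h
    · exact (ha _).1
    · exact DV.isFIET_one
  have hBf : ∀ i, IsFIET (B i) := by
    intro i
    rw [hB]
    dsimp only
    split_ifs with h
    · exact (hb _).1
    · exact DV.isFIET_one
  have hAs : ∀ i, DV.Supp (Set.Ico (1 - lam) 1) (A i) := by
    intro i
    rw [hA]
    dsimp only
    split_ifs with h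
    · exact hsupp _ (ha _).1 (ha _).2
    · exact DV.Supp.one _
  have hBs : ∀ i, DV.Supp (Set.Ico (1 - lam) 1) (B i) := by
    intro i
    rw [hB]
    dsimp only
    split_ifs with h
    · exact hsupp _ (hb _).1 (hb _).2
    · exact DV.Supp.one _
  obtain ⟨l, hlen, hmem, hprod⟩ := DV.core n m lam hlam0 hn hlam1 A B hAf hAs hBf hBs
  refine ⟨l, ?_, hmem, ?_⟩
  · rw [hlen]
    have hNR : (0 : ℝ) < ((N : ℕ) : ℝ) := by positivity
    have h1 : (m : ℝ) ≤ ((c + N - 1 : ℕ) : ℝ) / ((N : ℕ) : ℝ) := by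
      rw [hm]
      exact Nat.cast_div_le
    have h2 : ((c + N - 1 : ℕ) : ℝ) = (c : ℝ) + ((N : ℕ) : ℝ) - 1 := by
      have : 1 ≤ c + N := by omega
      push_cast [Nat.cast_sub this]
      ring
    have h5 : (c : ℝ) / ((N : ℕ) : ℝ) + 1 - ((c : ℝ) + ((N : ℕ) : ℝ) - 1) / ((N : ℕ) : ℝ) =
        1 / ((N : ℕ) : ℝ) := by
      field_simp
      ring
    have h6 : (0 : ℝ) < 1 / ((N : ℕ) : ℝ) := by positivity
    have h3 : (m : ℝ) < (c : ℝ) / ((N : ℕ) : ℝ) + 1 := by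
      rw [h2] at h1
      linarith
    have h4 : (c : ℝ) / ((N : ℕ) : ℝ) = (c : ℝ) / 2 ^ t := by rw [hcast]
    push_cast
    linarith
  · rw [hprod]
    have e1 : (List.ofFn fun i : Fin c => ⁅a i, b i⁆).prod =
        DV.Pi' c (fun i => ⁅A i, B i⁆) := by
      rw [← DV.Pi'_ofFn]
      refine congrArg List.prod (congrArg List.ofFn (funext fun i => ?_))
      rw [hA, hB]
      dsimp only
      rw [dif_pos i.isLt, dif_pos i.isLt]
    have e2 : DV.Pi' ((n + 1) * m) (fun i => ⁅A i, B i⁆) =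
        DV.Pi' c (fun i => ⁅A i, B i⁆) := by
      refine DV.Pi'_trunc (by rw [hNn] at hcm; omega) ?_
      intro k hk
      rw [hA, hB]
      dsimp only
      rw [dif_neg (by omega), dif_neg (by omega)]
      simp
    rw [e2, ← e1]
    exact hfeq
end
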